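/- arXiv:2507.06334 — 7 statements merged into one kernel-verified Lean document; each statement's English description precedes it below -/
import Mathlib

section
/- For an undirected graph G = (V, E) and a vertex v ∈ V, the coreness core(v) (defined as the minimum λ such that there exists a permutation p of V where every vertex w occurring no later than v in p has at most λ neighbors occurring after w in p) equals the maximum over all subsets S ⊆ V containing v of the minimum degree of the induced subgraph G[S]. -/
open Finset

/-- Degree of `u` inside the induced subgraph `G[S]`. -/
def degIn {V : Type*} [DecidableEq V] (G : SimpleGraph V) [DecidableRel G.Adj]
    (S : Finset V) (u : V) : ℕ :=
  (S.filter fun w => G.Adj u w).card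

/-- Minimum degree of the induced subgraph `G[S]` (0 for the empty set). -/
def mindegIn {V : Type*} [DecidableEq V] (G : SimpleGraph V) [DecidableRel G.Adj]
    (S : Finset V) : ℕ :=
  if h : S.Nonempty then S.inf' h (degIn G S) else 0

/-- `core(v)`: the maximum over subsets `S ∋ v` of the minimum degree of `G[S]`. -/
def coreMax {V : Type*} [Fintype V] [DecidableEq V] (G : SimpleGraph V) [DecidableRel G.Adj]
    (v : V) : ℕ :=
  ((univ : Finset V).powerset.filter fun S => v ∈ S).sup (mindegIn G)


/-!
Any ordering bounds every `mindegIn G S` with `v ∈ S`: the first vertex `w` of `S` comes no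
later than `v`, and all its neighbours in `S` come after it. Conversely, repeatedly deleting a
vertex of minimum degree, as long as `v` has not been deleted, yields an ordering in which
every vertex up to `v` has at most `coreMax G v` later neighbours, since each deletion happens
inside a set that still contains `v`.
-/

section Peeling

variable {V : Type*} [DecidableEq V] (G : SimpleGraph V) [DecidableRel G.Adj]

lemma mindegIn_le_degIn {S : Finset V} {w : V} (hw : w ∈ S) : mindegIn G S ≤ degIn G S w := by
  rw [mindegIn, dif_pos ⟨w, hw⟩]
  exact inf'_le _ hw

lemma exists_degIn_eq_mindegIn {S : Finset V} (hS : S.Nonempty) :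
    ∃ w ∈ S, degIn G S w = mindegIn G S := by
  obtain ⟨w, hw, hmin⟩ := exists_mem_eq_inf' hS (degIn G S)
  exact ⟨w, hw, by rw [mindegIn, dif_pos hS, hmin]⟩

lemma mindegIn_le_coreMax [Fintype V] {S : Finset V} {v : V} (hv : v ∈ S) :
    mindegIn G S ≤ coreMax G v :=
  le_sup (by simp [hv])

section Orderings

variable [Fintype V] {α : Type*} [LinearOrder α] {p : V → α}

lemma degIn_le_card_later (hp : p.Injective) {S : Finset V} {w : V}
    (hfirst : ∀ u ∈ S, p w ≤ p u) :
    degIn G S w ≤ #{u | G.Adj u w ∧ p w < p u} := by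
  refine card_le_card fun u hu => ?_
  obtain ⟨huS, hadj⟩ := mem_filter.1 hu
  exact mem_filter.2 ⟨mem_univ u, hadj.symm,
    (hfirst u huS).lt_of_ne fun h => hadj.ne (hp h)⟩

lemma mindegIn_le_of_card_later_le (hp : p.Injective) {v : V} {k : ℕ}
    (hk : ∀ w, p w ≤ p v → #{u | G.Adj u w ∧ p w < p u} ≤ k) {S : Finset V} (hv : v ∈ S) :
    mindegIn G S ≤ k := by
  obtain ⟨w, hw, hfirst⟩ := exists_min_image S p ⟨v, hv⟩
  calc mindegIn G S ≤ degIn G S w := mindegIn_le_degIn G hw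
    _ ≤ #{u | G.Adj u w ∧ p w < p u} := degIn_le_card_later G hp hfirst
    _ ≤ k := hk w (hfirst v hv)

lemma coreMax_le_of_card_later_le (hp : p.Injective) {v : V} {k : ℕ}
    (hk : ∀ w, p w ≤ p v → #{u | G.Adj u w ∧ p w < p u} ≤ k) :
    coreMax G v ≤ k :=
  Finset.sup_le fun _ hS => mindegIn_le_of_card_later_le G hp hk (mem_filter.1 hS).2

end Orderings

/-- If `v ∉ l` then `l.idxOf v = l.length`, so the condition constrains every vertex of `l`. -/
def IsDegenerateUpTo (k : ℕ) (v : V) (l : List V) : Prop :=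
  ∀ w ∈ l, l.idxOf w ≤ l.idxOf v → #{u ∈ l.toFinset | G.Adj u w ∧ l.idxOf w < l.idxOf u} ≤ k

variable {G}

lemma IsDegenerateUpTo.cons {k : ℕ} {v w : V} {l : List V}
    (hdeg : degIn G (insert w l.toFinset) w ≤ k) (hl : w ≠ v → IsDegenerateUpTo G k v l) :
    IsDegenerateUpTo G k v (w :: l) := by
  intro x hx hxv
  by_cases hxw : x = w
  · subst hxw
    refine le_trans (card_le_card fun u hu => ?_) hdeg
    obtain ⟨hul, hadj, -⟩ := mem_filter.1 hu
    exact mem_filter.2 ⟨by simpa using hul, hadj.symm⟩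
  have hxl : x ∈ l := (List.mem_cons.1 hx).resolve_left hxw
  have hvw : w ≠ v := by
    rintro rfl
    rw [List.idxOf_cons_self, List.idxOf_cons_ne _ (Ne.symm hxw)] at hxv
    omega
  rw [List.idxOf_cons_ne _ (Ne.symm hxw), List.idxOf_cons_ne _ hvw] at hxv
  refine le_trans (card_le_card fun u hu => ?_) (hl hvw x hxl (by omega))
  obtain ⟨hul, hadj, hlt⟩ := mem_filter.1 hu
  have huw : u ≠ w := by
    rintro rfl
    rw [List.idxOf_cons_self] at hlt
    omega
  rw [List.idxOf_cons_ne _ (Ne.symm hxw), List.idxOf_cons_ne _ (Ne.symm huw)] at hlt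
  exact mem_filter.2 ⟨by simpa [huw] using hul, hadj, by omega⟩

lemma exists_isDegenerateUpTo {k : ℕ} {v : V}
    (hk : ∀ S : Finset V, v ∈ S → mindegIn G S ≤ k) (T : Finset V) (hv : v ∈ T) :
    ∃ l : List V, l.Nodup ∧ l.toFinset = T ∧ IsDegenerateUpTo G k v l := by
  induction T using strongInduction with
  | H T ih =>
    obtain ⟨w, hwT, hw⟩ := exists_degIn_eq_mindegIn G ⟨v, hv⟩
    obtain ⟨l, hnd, hl, hdeg⟩ : ∃ l : List V, l.Nodup ∧ l.toFinset = T.erase w ∧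
        (w ≠ v → IsDegenerateUpTo G k v l) := by
      by_cases hwv : w = v
      · exact ⟨(T.erase w).toList, nodup_toList _, toList_toFinset _, (absurd hwv ·)⟩
      · obtain ⟨l, hnd, hl, hdeg⟩ :=
          ih _ (erase_ssubset hwT) (mem_erase.2 ⟨Ne.symm hwv, hv⟩)
        exact ⟨l, hnd, hl, fun _ => hdeg⟩
    have hT : insert w l.toFinset = T := by rw [hl, insert_erase hwT]
    have hwl : w ∉ l := fun h => by simpa [hl] using List.mem_toFinset.2 h
    refine ⟨w :: l, List.nodup_cons.2 ⟨hwl, hnd⟩, by simp [hT], ?_⟩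
    exact IsDegenerateUpTo.cons (by rw [hT, hw]; exact hk T hv) hdeg

lemma exists_equiv_fin_idxOf [Fintype V] {l : List V} (hnd : l.Nodup) (hl : l.toFinset = univ) :
    ∃ p : V ≃ Fin (Fintype.card V), ∀ x, (p x : ℕ) = l.idxOf x := by
  have hmem : ∀ x, x ∈ l := fun x => List.mem_toFinset.1 (hl ▸ mem_univ x)
  have hlen : l.length = Fintype.card V := by
    rw [← card_univ, ← hl, List.toFinset_card_of_nodup hnd]
  exact ⟨(hnd.getEquivOfForallMemList l hmem).symm.trans (finCongr hlen), fun _ => rfl⟩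

end Peeling

/-- The coreness of `v`, defined as the minimum `k` such that some ordering (permutation)
of the vertices has every vertex `w` occurring no later than `v` with at most `k` neighbors
occurring strictly after `w`, equals the maximum over subsets `S ∋ v` of the minimum degree
of the induced subgraph `G[S]`. -/
theorem coreness_perm_eq_max_min_degree {V : Type*} [Fintype V] [DecidableEq V]
    (G : SimpleGraph V) [DecidableRel G.Adj] (v : V) :
    IsLeast {k : ℕ | ∃ p : V ≃ Fin (Fintype.card V),
        ∀ w : V, p w ≤ p v →
          ((univ : Finset V).filter fun u => G.Adj u w ∧ p w < p u).card ≤ k}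
      (coreMax G v) := by
  refine ⟨?_, fun k ⟨p, hp⟩ => coreMax_le_of_card_later_le G p.injective hp⟩
  obtain ⟨l, hnd, hl, hdeg⟩ :=
    exists_isDegenerateUpTo (fun S => mindegIn_le_coreMax G) univ (mem_univ v)
  obtain ⟨p, hp⟩ := exists_equiv_fin_idxOf hnd hl
  refine ⟨p, fun w hw => ?_⟩
  simp only [Fin.le_def, Fin.lt_def, hp] at hw ⊢
  simpa [hl] using hdeg w (List.mem_toFinset.1 (hl ▸ mem_univ w)) hw
end

section
/- For any balanced directed graph G = (V, E) on n vertices and any parameter ε ∈ (0, 0.1), the maximum out-degree satisfies max_{v∈V} δ⁺(v) ≤ (1 + ε/2)·ρ(G) + 4·log n / ε, where ρ(G) is the density of the underlying undirected graph. -/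
open Finset
open scoped NNRat

/-- Out-degree of `v` in the directed edge set `E`. -/
def outdeg {V : Type*} [DecidableEq V] (E : Finset (V × V)) (v : V) : ℕ :=
  (E.filter fun e => e.1 = v).card

/-- A directed graph is balanced if `δ⁺(u) ≤ δ⁺(v) + 1` for every edge `u → v`. -/
def IsBalanced {V : Type*} [DecidableEq V] (E : Finset (V × V)) : Prop :=
  ∀ e ∈ E, outdeg E e.1 ≤ outdeg E e.2 + 1

/-- Density of the underlying undirected graph: the maximum over nonempty `S ⊆ V`
of `|E[S]| / |S|`. -/
def ddensity {V : Type*} [Fintype V] [DecidableEq V] (E : Finset (V × V)) : ℚ≥0 :=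
  ((univ : Finset V).powerset.filter fun S => S.Nonempty).sup
    fun S => ((E.filter fun e => e.1 ∈ S ∧ e.2 ∈ S).card : ℚ≥0) / (S.card : ℚ≥0)

/-!
Let `v₀` have maximal out-degree `Δ` and let `Tᵢ` be the set of vertices reachable from `v₀`
in at most `i` steps. Balancedness gives every vertex of `Tᵢ` out-degree at least `Δ - i`, and
all these out-edges lie inside `Tᵢ₊₁`, so `|Tᵢ| (Δ - i) ≤ ρ |Tᵢ₊₁|`. If `Δ` exceeded
`(1 + ε/2) ρ + 4 log n / ε`, the balls would grow by a factor `1 + ε/2` for `⌈4 log n / ε⌉`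
consecutive steps and end up with more than `n` vertices.
-/

section OutBall

variable {V : Type*} [DecidableEq V] (E : Finset (V × V)) (v₀ : V)

def outBall : ℕ → Finset V
  | 0 => {v₀}
  | i + 1 => outBall i ∪ (E.filter fun e => e.1 ∈ outBall i).image Prod.snd

lemma outBall_nonempty : ∀ i, (outBall E v₀ i).Nonempty
  | 0 => singleton_nonempty v₀
  | i + 1 => (outBall_nonempty i).mono subset_union_left

lemma filter_fst_mem_outBall_subset (i : ℕ) :
    E.filter (fun e => e.1 ∈ outBall E v₀ i) ⊆
      E.filter fun e => e.1 ∈ outBall E v₀ (i + 1) ∧ e.2 ∈ outBall E v₀ (i + 1) := by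
  intro e he
  have he' := mem_filter.mp he
  refine mem_filter.mpr ⟨he'.1, mem_union_left _ he'.2, mem_union_right _ ?_⟩
  exact mem_image_of_mem Prod.snd he

variable {E v₀}

lemma outdeg_le_outdeg_add_of_mem_outBall (hbal : IsBalanced E) :
    ∀ {i : ℕ} {v : V}, v ∈ outBall E v₀ i → outdeg E v₀ ≤ outdeg E v + i
  | 0, v, hv => by rw [mem_singleton.mp hv]; omega
  | i + 1, v, hv => by
    rcases mem_union.mp hv with hv | hv
    · have := outdeg_le_outdeg_add_of_mem_outBall hbal hv
      omega
    · obtain ⟨e, he, rfl⟩ := mem_image.mp hv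
      have he' := mem_filter.mp he
      have := outdeg_le_outdeg_add_of_mem_outBall hbal he'.2
      have := hbal e he'.1
      omega

end OutBall

lemma sum_outdeg_eq_card_filter_fst_mem {V : Type*} [DecidableEq V] (E : Finset (V × V))
    (S : Finset V) :
    ∑ u ∈ S, outdeg E u = #(E.filter fun e => e.1 ∈ S) := by
  rw [card_eq_sum_card_fiberwise (s := E.filter fun e => e.1 ∈ S) (f := Prod.fst) (t := S)
    fun e he => (mem_filter.mp he).2]
  refine sum_congr rfl fun u hu => ?_
  rw [outdeg, filter_filter]
  congr 1
  exact filter_congr fun e _ => ⟨fun h => ⟨h ▸ hu, h⟩, And.right⟩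

section Density

variable {V : Type*} [Fintype V] [DecidableEq V] (E : Finset (V × V))

lemma card_filter_mem_le_ddensity_mul {S : Finset V} (hS : S.Nonempty) :
    (#(E.filter fun e => e.1 ∈ S ∧ e.2 ∈ S) : ℝ) ≤ ddensity E * #S := by
  have hle : (#(E.filter fun e => e.1 ∈ S ∧ e.2 ∈ S) : ℚ≥0) / #S ≤ ddensity E :=
    le_sup (f := fun S : Finset V => (#(E.filter fun e => e.1 ∈ S ∧ e.2 ∈ S) : ℚ≥0) / #S)
      (mem_filter.mpr ⟨mem_powerset.mpr (subset_univ S), hS⟩)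
  rw [div_le_iff₀ (by exact_mod_cast hS.card_pos)] at hle
  exact_mod_cast hle

variable {E} {v₀ : V}

lemma card_outBall_mul_le (hbal : IsBalanced E) (i : ℕ) :
    (#(outBall E v₀ i) : ℝ) * (outdeg E v₀ - i) ≤ ddensity E * #(outBall E v₀ (i + 1)) :=
  calc (#(outBall E v₀ i) : ℝ) * (outdeg E v₀ - i)
      = ∑ _u ∈ outBall E v₀ i, ((outdeg E v₀ : ℝ) - i) := by
        rw [sum_const, nsmul_eq_mul]
    _ ≤ ∑ u ∈ outBall E v₀ i, (outdeg E u : ℝ) := sum_le_sum fun u hu => by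
        have := outdeg_le_outdeg_add_of_mem_outBall hbal hu
        rw [sub_le_iff_le_add]
        exact_mod_cast this
    _ = #(E.filter fun e => e.1 ∈ outBall E v₀ i) := by
        rw [← sum_outdeg_eq_card_filter_fst_mem, Nat.cast_sum]
    _ ≤ #(E.filter fun e => e.1 ∈ outBall E v₀ (i + 1) ∧ e.2 ∈ outBall E v₀ (i + 1)) := by
        exact_mod_cast card_le_card (filter_fst_mem_outBall_subset E v₀ i)
    _ ≤ ddensity E * #(outBall E v₀ (i + 1)) :=
        card_filter_mem_le_ddensity_mul E (outBall_nonempty E v₀ (i + 1))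

lemma mul_card_outBall_lt_card_outBall_succ (hbal : IsBalanced E) {c : ℝ} {i : ℕ}
    (hc : c * ddensity E < outdeg E v₀ - i) :
    c * #(outBall E v₀ i) < #(outBall E v₀ (i + 1)) := by
  have hpos : (0 : ℝ) < #(outBall E v₀ i) := by exact_mod_cast (outBall_nonempty E v₀ i).card_pos
  refine lt_of_mul_lt_mul_left ?_ (NNRat.cast_nonneg (ddensity E))
  calc (ddensity E : ℝ) * (c * #(outBall E v₀ i))
      = c * ddensity E * #(outBall E v₀ i) := by ring
    _ < #(outBall E v₀ i) * (outdeg E v₀ - i) := by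
        rw [mul_comm (#(outBall E v₀ i) : ℝ)]
        exact mul_lt_mul_of_pos_right hc hpos
    _ ≤ ddensity E * #(outBall E v₀ (i + 1)) := card_outBall_mul_le hbal i

end Density

lemma pow_le_of_mul_le_succ {a : ℕ → ℝ} {c : ℝ} (hc : 0 ≤ c) (h0 : 1 ≤ a 0) {K : ℕ}
    (hstep : ∀ i < K, c * a i ≤ a (i + 1)) : c ^ K ≤ a K := by
  induction K with
  | zero => simpa using h0
  | succ K ih =>
    calc c ^ (K + 1) = c * c ^ K := pow_succ' c K
      _ ≤ c * a K := mul_le_mul_of_nonneg_left (ih fun i hi => hstep i (by omega)) hc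
      _ ≤ a (K + 1) := hstep K K.lt_succ_self

lemma lt_one_add_half_pow {x ε : ℝ} (hx : 1 < x) (hε0 : 0 < ε) (hε4 : ε ≤ 4) {K : ℕ}
    (hK : 4 * Real.log x / ε ≤ K) : x < (1 + ε / 2) ^ K := by
  have hlogx := Real.log_pos hx
  have hKpos : (0 : ℝ) < K := lt_of_lt_of_le (by positivity) hK
  -- `log (1 + t) > 2t / (t + 2)`, which is at least `ε / 4` at `t = ε / 2` as long as `ε ≤ 4`
  have hlog : ε / 4 < Real.log (1 + ε / 2) := by
    refine lt_of_le_of_lt ?_ (Real.lt_log_one_add_of_pos (by positivity : 0 < ε / 2))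
    rw [le_div_iff₀ (by positivity)]
    nlinarith
  rw [← Real.log_lt_log_iff (by linarith) (by positivity), Real.log_pow]
  rw [div_le_iff₀ hε0] at hK
  nlinarith

/-- In any balanced directed graph on `n ≥ 2` vertices and for any `ε ∈ (0, 0.1)`,
the maximum out-degree is at most `(1 + ε/2)·ρ(G) + 4·log n / ε`. -/
theorem max_outdeg_le_density {V : Type*} [Fintype V] [DecidableEq V]
    (E : Finset (V × V)) (ε : ℝ) (hn : 2 ≤ Fintype.card V)
    (hbal : IsBalanced E) (hε0 : 0 < ε) (hε1 : ε < 0.1) :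
    (((univ : Finset V).sup (outdeg E) : ℕ) : ℝ) ≤
      (1 + ε / 2) * (ddensity E : ℝ) + 4 * Real.log (Fintype.card V) / ε := by
  by_contra! hlarge
  have hV : (univ : Finset V).Nonempty := card_pos.mp (by rw [card_univ]; omega)
  obtain ⟨v₀, -, hv₀⟩ := exists_mem_eq_sup univ hV (outdeg E)
  rw [hv₀] at hlarge
  set K := ⌈4 * Real.log (Fintype.card V) / ε⌉₊
  have hgrowth : ∀ i < K, (1 + ε / 2) * #(outBall E v₀ i) ≤ #(outBall E v₀ (i + 1)) :=
    fun i hi => (mul_card_outBall_lt_card_outBall_succ hbal (by linarith [Nat.lt_ceil.mp hi])).le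
  have hballK := pow_le_of_mul_le_succ (a := fun i => (#(outBall E v₀ i) : ℝ))
    (by positivity) (by simp [outBall]) hgrowth
  have hpow := lt_one_add_half_pow (x := Fintype.card V) (by exact_mod_cast hn) hε0
    (by norm_num at hε1; linarith) (Nat.le_ceil _)
  have hcard : (#(outBall E v₀ K) : ℝ) ≤ Fintype.card V := by
    exact_mod_cast card_le_univ (outBall E v₀ K)
  linarith
end

section
/- For any balanced directed graph G = (V, E) on n vertices and ε ∈ (0, 0.1) such that the arboricity λ(G) of the underlying undirected graph satisfies λ(G) ≥ 16 log n / ε², the maximum out-degree lies in the interval [λ(G)/2, (1 + ε)·λ(G)]. -/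
open Finset
open scoped NNRat

/-- Arboricity of the underlying undirected graph, via Nash-Williams:
`max` over `S ⊆ V` with `|S| ≥ 2` of `⌈|E[S]| / (|S| − 1)⌉`. -/
def arboricity {V : Type*} [Fintype V] [DecidableEq V] (E : Finset (V × V)) : ℕ :=
  ((univ : Finset V).powerset.filter fun S => 2 ≤ S.card).sup
    fun S => ⌈((E.filter fun e => e.1 ∈ S ∧ e.2 ∈ S).card : ℚ) / ((S.card : ℚ) - 1)⌉₊

section OutNeighbourhoods

variable {V : Type*} [DecidableEq V] (E : Finset (V × V))

def edgesWithin (S : Finset V) : Finset (V × V) :=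
  E.filter fun e => e.1 ∈ S ∧ e.2 ∈ S

def closedOutNbhd (S : Finset V) : Finset V :=
  S ∪ (E.filter fun e => e.1 ∈ S).image Prod.snd

lemma subset_closedOutNbhd (S : Finset V) : S ⊆ closedOutNbhd E S :=
  subset_union_left

lemma sum_outdeg_eq_card_filter (S : Finset V) :
    ∑ v ∈ S, outdeg E v = #(E.filter fun e => e.1 ∈ S) :=
  sum_card_fiberwise_eq_card_filter E S Prod.fst

lemma card_edgesWithin_le_sum_outdeg (S : Finset V) :
    #(edgesWithin E S) ≤ ∑ v ∈ S, outdeg E v := by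
  rw [sum_outdeg_eq_card_filter]
  exact card_le_card (monotone_filter_right E fun _ _ h => h.1)

lemma sum_outdeg_le_card_edgesWithin_closedOutNbhd (S : Finset V) :
    ∑ v ∈ S, outdeg E v ≤ #(edgesWithin E (closedOutNbhd E S)) := by
  rw [sum_outdeg_eq_card_filter]
  refine card_le_card fun e he => ?_
  rw [mem_filter] at he
  exact mem_filter.mpr ⟨he.1, mem_union_left _ he.2,
    mem_union_right _ (mem_image_of_mem _ (mem_filter.mpr he))⟩

lemma IsBalanced.outdeg_le_outdeg_add (hbal : IsBalanced E) (v₀ : V) (k : ℕ) :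
    ∀ v ∈ (closedOutNbhd E)^[k] {v₀}, outdeg E v₀ ≤ outdeg E v + k := by
  induction k with
  | zero => simp
  | succ k ih =>
    intro v hv
    rw [Function.iterate_succ_apply', closedOutNbhd, mem_union, mem_image] at hv
    rcases hv with hv | ⟨e, he, rfl⟩
    · linarith [ih v hv]
    · rw [mem_filter] at he
      linarith [ih e.1 he.2, hbal e he.1]

lemma two_le_card_iterate_closedOutNbhd (hloopless : ∀ e ∈ E, e.1 ≠ e.2) {v₀ : V}
    (hv₀ : 0 < outdeg E v₀) {k : ℕ} (hk : 1 ≤ k) :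
    2 ≤ #((closedOutNbhd E)^[k] {v₀}) := by
  obtain ⟨e, he⟩ := card_pos.mp hv₀
  rw [mem_filter] at he
  have hsucc : {v₀, e.2} ⊆ closedOutNbhd E {v₀} :=
    insert_subset (mem_union_left _ (mem_singleton_self v₀)) <| singleton_subset_iff.mpr <|
      mem_union_right _ (mem_image_of_mem _ (mem_filter.mpr ⟨he.1, he.2 ▸ mem_singleton_self _⟩))
  calc 2 = #{v₀, e.2} := (card_pair (he.2 ▸ hloopless e he.1)).symm
    _ ≤ #((closedOutNbhd E)^[1] {v₀}) := card_le_card hsucc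
    _ ≤ _ := card_le_card <|
      Function.monotone_iterate_of_id_le (subset_closedOutNbhd E) hk {v₀}

variable [Fintype V]

lemma card_edgesWithin_le_arboricity_mul {S : Finset V} (hS : 2 ≤ #S) :
    #(edgesWithin E S) ≤ arboricity E * (#S - 1) := by
  have hceil : ⌈(#(edgesWithin E S) : ℚ) / (#S - 1 : ℚ)⌉₊ ≤ arboricity E :=
    le_sup (f := fun S => ⌈(#(edgesWithin E S) : ℚ) / (#S - 1 : ℚ)⌉₊) (by simpa using hS)
  have hpos : (0 : ℚ) < #S - 1 := by
    rw [sub_pos]; exact_mod_cast hS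
  rw [Nat.ceil_le, div_le_iff₀ hpos] at hceil
  have hcast : ((#(edgesWithin E S) : ℕ) : ℚ) ≤ ((arboricity E * (#S - 1) : ℕ) : ℚ) := by
    push_cast [Nat.cast_sub (one_le_two.trans hS)]; exact hceil
  exact_mod_cast hcast

lemma arboricity_le_two_mul_sup_outdeg : arboricity E ≤ 2 * univ.sup (outdeg E) := by
  refine Finset.sup_le fun S hS => ?_
  change ⌈(#(edgesWithin E S) : ℚ) / (#S - 1 : ℚ)⌉₊ ≤ _
  have hS : (2 : ℚ) ≤ #S := by exact_mod_cast (mem_filter.mp hS).2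
  have hsum : #(edgesWithin E S) ≤ #S * univ.sup (outdeg E) :=
    (card_edgesWithin_le_sum_outdeg E S).trans <|
      sum_le_card_nsmul _ _ _ fun v _ => le_sup (mem_univ v)
  rw [Nat.ceil_le, div_le_iff₀ (by linarith)]
  have hsumℚ : (#(edgesWithin E S) : ℚ) ≤ #S * univ.sup (outdeg E) := by exact_mod_cast hsum
  push_cast
  nlinarith [(univ.sup (outdeg E)).cast_nonneg (α := ℚ)]

lemma card_mul_le_arboricity_mul_card_closedOutNbhd {S : Finset V} {d : ℕ}
    (hS : 2 ≤ #(closedOutNbhd E S)) (hd : ∀ v ∈ S, d ≤ outdeg E v) :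
    #S * d ≤ arboricity E * (#(closedOutNbhd E S) - 1) :=
  calc #S * d ≤ ∑ v ∈ S, outdeg E v := card_nsmul_le_sum _ _ _ hd
    _ ≤ #(edgesWithin E (closedOutNbhd E S)) := sum_outdeg_le_card_edgesWithin_closedOutNbhd E S
    _ ≤ _ := card_edgesWithin_le_arboricity_mul E hS

end OutNeighbourhoods

section UpperBound

variable {V : Type*} [Fintype V] [DecidableEq V] {E : Finset (V × V)}

lemma one_add_quarter_mul_card_iterate_le (hloopless : ∀ e ∈ E, e.1 ≠ e.2) (hbal : IsBalanced E)
    {ε : ℝ} (hε0 : 0 < ε) (hε : ε ≤ 1 / 2) {v₀ : V}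
    (hv₀ : (1 + ε) * arboricity E < outdeg E v₀) {k : ℕ} (hk : (k : ℝ) < ε * outdeg E v₀ / 2) :
    (1 + ε / 4) * #((closedOutNbhd E)^[k] {v₀}) ≤ #((closedOutNbhd E)^[k + 1] {v₀}) := by
  set S := fun j => (closedOutNbhd E)^[j] {v₀}
  set a : ℝ := (arboricity E : ℝ)
  have hΔpos : 0 < outdeg E v₀ := by
    have : (0 : ℝ) ≤ (1 + ε) * a := by positivity
    exact_mod_cast this.trans_lt hv₀
  have hkΔ : k ≤ outdeg E v₀ := by
    have : (k : ℝ) ≤ outdeg E v₀ := by nlinarith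
    exact_mod_cast this
  have hS1 : 1 ≤ #(S k) := card_pos.mpr ⟨v₀,
    Function.monotone_iterate_of_id_le (subset_closedOutNbhd E) (Nat.zero_le k) {v₀}
      (mem_singleton_self v₀)⟩
  have hS2 : 2 ≤ #(S (k + 1)) :=
    two_le_card_iterate_closedOutNbhd E hloopless hΔpos (Nat.le_add_left 1 k)
  have hstep : S (k + 1) = closedOutNbhd E (S k) := Function.iterate_succ_apply' _ _ _
  have hcount : #(S k) * (outdeg E v₀ - k) ≤ arboricity E * (#(S (k + 1)) - 1) := by
    rw [hstep] at hS2 ⊢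
    refine card_mul_le_arboricity_mul_card_closedOutNbhd E hS2 fun v hv => ?_
    have := hbal.outdeg_le_outdeg_add E v₀ k v hv
    omega
  have hcountℝ : (#(S k) : ℝ) * (outdeg E v₀ - k) ≤ a * (#(S (k + 1)) - 1) := by
    have := (Nat.cast_le (α := ℝ)).mpr hcount
    push_cast [Nat.cast_sub hkΔ, Nat.cast_sub (one_le_two.trans hS2)] at this
    exact this
  -- `Δ - k > (1 - ε / 2) Δ > (1 - ε / 2) (1 + ε) λ ≥ (1 + ε / 4) λ` as `ε ≤ 1 / 2`.
  have hdeg : (1 + ε / 4) * a ≤ outdeg E v₀ - k := by nlinarith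
  have hS1ℝ : (1 : ℝ) ≤ #(S k) := by exact_mod_cast hS1
  have hS2ℝ : (2 : ℝ) ≤ #(S (k + 1)) := by exact_mod_cast hS2
  have hlhs : (0 : ℝ) < #(S k) * (outdeg E v₀ - k) := mul_pos (by linarith) (by nlinarith)
  have ha : 0 < a := by nlinarith
  refine le_of_mul_le_mul_left ?_ ha
  nlinarith

lemma sup_outdeg_le_of_log_card_le (hloopless : ∀ e ∈ E, e.1 ≠ e.2) (hbal : IsBalanced E)
    {ε : ℝ} (hε0 : 0 < ε) (hε : ε ≤ 1 / 2)
    (hlog : 16 * Real.log (Fintype.card V) ≤ ε ^ 2 * arboricity E) :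
    ((univ.sup (outdeg E) : ℕ) : ℝ) ≤ (1 + ε) * arboricity E := by
  by_contra! hΔ
  have hne : (univ : Finset V).Nonempty := by
    by_contra hV
    simp only [not_nonempty_iff_eq_empty.mp hV, sup_empty, bot_eq_zero', CharP.cast_eq_zero] at hΔ
    nlinarith [(arboricity E).cast_nonneg (α := ℝ)]
  obtain ⟨v₀, -, hv₀⟩ := exists_mem_eq_sup univ hne (outdeg E)
  rw [hv₀] at hΔ
  set Δ : ℝ := (outdeg E v₀ : ℝ)
  set K := ⌈ε * Δ / 2⌉₊
  have hgrowth : (1 + ε / 4) ^ K ≤ #((closedOutNbhd E)^[K] {v₀}) := by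
    simpa using geom_le (u := fun k => (#((closedOutNbhd E)^[k] {v₀}) : ℝ)) (by positivity) K
      fun k hk => one_add_quarter_mul_card_iterate_le hloopless hbal hε0 hε hΔ <| by
        have := Nat.ceil_lt_add_one (by positivity : 0 ≤ ε * Δ / 2)
        have : (k : ℝ) + 1 ≤ K := by exact_mod_cast hk
        linarith
  have hcard : (1 + ε / 4) ^ K ≤ (Fintype.card V : ℝ) :=
    hgrowth.trans (by exact_mod_cast card_le_univ _)
  have hK : K * (ε / 8) ≤ Real.log (Fintype.card V) := by
    have hlog1 : ε / 8 ≤ Real.log (1 + ε / 4) :=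
      le_trans (by rw [le_div_iff₀ (by positivity)]; nlinarith)
        (Real.le_log_one_add_of_nonneg (by positivity))
    calc K * (ε / 8) ≤ K * Real.log (1 + ε / 4) := by gcongr
      _ = Real.log ((1 + ε / 4) ^ K) := (Real.log_pow _ _).symm
      _ ≤ _ := Real.log_le_log (by positivity) hcard
  have hKΔ : ε * Δ / 2 * (ε / 8) ≤ K * (ε / 8) := by gcongr; exact Nat.le_ceil _
  have haΔ : ε ^ 2 * arboricity E < ε ^ 2 * Δ := by
    gcongr; nlinarith [(arboricity E).cast_nonneg (α := ℝ)]
  linarith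

end UpperBound

/-- For any balanced loopless directed graph on `n` vertices and `ε ∈ (0, 0.1)` such that
the arboricity `λ(G)` satisfies `λ(G) ≥ 16 log n / ε²`, the maximum out-degree lies in
`[λ(G)/2, (1 + ε)·λ(G)]`. -/
theorem max_outdeg_arboricity {V : Type*} [Fintype V] [DecidableEq V]
    (E : Finset (V × V)) (ε : ℝ)
    (hloopless : ∀ e ∈ E, e.1 ≠ e.2)
    (hbal : IsBalanced E) (hε0 : 0 < ε) (hε1 : ε < 0.1)
    (harb : 16 * Real.log (Fintype.card V) / ε ^ 2 ≤ (arboricity E : ℝ)) :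
    (arboricity E : ℝ) / 2 ≤ (((univ : Finset V).sup (outdeg E) : ℕ) : ℝ) ∧
      (((univ : Finset V).sup (outdeg E) : ℕ) : ℝ) ≤ (1 + ε) * (arboricity E : ℝ) := by
  constructor
  · have := arboricity_le_two_mul_sup_outdeg E
    rw [div_le_iff₀ two_pos]
    exact_mod_cast this.trans_eq (mul_comm _ _)
  · rw [div_le_iff₀ (by positivity)] at harb
    exact sup_outdeg_le_of_log_card_le hloopless hbal hε0 (by linarith) (harb.trans_eq (mul_comm _ _))
end

section
/- Let G = (V, E) be an undirected graph and G_p = (V, E_p) the random subgraph where each edge is kept independently with probability p ∈ (0, 1). Then with high probability (probability at least 1 − n^{-c} for a constant c), for every vertex v, core(G_p, v) ≤ (1 + ε)·p·core(G, v) + O(log n / ε). -/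
open Finset
open scoped NNRat Classical

/-- Degree of `u` inside `S` in the undirected graph with edge set `F`. -/
def edegIn {n : ℕ} (F : Finset (Sym2 (Fin n))) (S : Finset (Fin n)) (u : Fin n) : ℕ :=
  (S.filter fun w => w ≠ u ∧ s(u, w) ∈ F).card

/-- Minimum degree of the induced subgraph on `S`. -/
def emindegIn {n : ℕ} (F : Finset (Sym2 (Fin n))) (S : Finset (Fin n)) : ℕ :=
  if h : S.Nonempty then S.inf' h (edegIn F S) else 0

/-- Coreness of `v` in the undirected graph with edge set `F`. -/
def coreE {n : ℕ} (F : Finset (Sym2 (Fin n))) (v : Fin n) : ℕ :=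
  ((univ : Finset (Fin n)).powerset.filter fun S => v ∈ S).sup (emindegIn F)

/-- Density of the undirected graph with edge set `F`: the maximum over nonempty
`S` of `|F[S]| / |S|`. -/
def densE {n : ℕ} (F : Finset (Sym2 (Fin n))) : ℚ≥0 :=
  ((univ : Finset (Fin n)).powerset.filter fun S => S.Nonempty).sup
    fun S => ((F ∩ S.sym2).card : ℚ≥0) / (S.card : ℚ≥0)

/-- Arboricity via Nash-Williams: `max` over `S` with `|S| ≥ 2` of `⌈|F[S]|/(|S|−1)⌉`. -/
def arbE {n : ℕ} (F : Finset (Sym2 (Fin n))) : ℕ :=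
  ((univ : Finset (Fin n)).powerset.filter fun S => 2 ≤ S.card).sup
    fun S => ⌈((F ∩ S.sym2).card : ℚ) / ((S.card : ℚ) - 1)⌉₊

/-- The probability, when each edge of `E0` is kept independently with probability `p`,
that the resulting random edge subset satisfies `A`. -/
noncomputable def probE {n : ℕ} (E0 : Finset (Sym2 (Fin n))) (p : ℝ)
    (A : Finset (Sym2 (Fin n)) → Prop) : ℝ :=
  ∑ F ∈ E0.powerset,
    if A F then p ^ F.card * (1 - p) ^ (E0.card - F.card) else 0

/-!
Peel `G` in degeneracy order, deleting in each round a vertex of minimum degree in what is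
left; the `d_i` forward edges of the vertex deleted in round `i` satisfy `d_i ≤ core(G, v)` for
every `v` still present. If `S ∋ v` realizes `core(G_p, v)`, the first vertex of `S` to be
deleted, say in round `i`, has all its `G_p`-neighbours in `S` among its forward edges, so
`core(G_p, v)` is at most the number of sampled forward edges of round `i`. That number is
binomial with mean `p d_i`, and by the exponential-moment (Chernoff) bound with base `1 + ε`
it exceeds `(1 + ε) p d_i + λ` with probability at most `exp (-ε λ / (1 + ε))`, which is
`≤ n⁻²` for `λ = 4 log n / ε`. A union bound over the `n` rounds concludes.
-/

section Powerset

variable {α R : Type*} [CommRing R]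

theorem Finset.sum_powerset_bernoulli_mul_prod (s : Finset α) (p : R) (x : α → R) :
    ∑ t ∈ s.powerset, p ^ t.card * (1 - p) ^ (s.card - t.card) * ∏ e ∈ t, x e
      = ∏ e ∈ s, (p * x e + (1 - p)) := by
  rw [prod_add]
  refine sum_congr rfl fun t ht => ?_
  rw [prod_mul_distrib, prod_const, prod_const, card_sdiff_of_subset (mem_powerset.1 ht)]
  ring

theorem Finset.sum_powerset_bernoulli (s : Finset α) (p : R) :
    ∑ t ∈ s.powerset, p ^ t.card * (1 - p) ^ (s.card - t.card) = 1 := by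
  simpa using s.sum_powerset_bernoulli_mul_prod p 1

theorem Finset.sum_powerset_bernoulli_mul_pow_card_inter [DecidableEq α] (s D : Finset α)
    (p y : R) :
    ∑ t ∈ s.powerset, p ^ t.card * (1 - p) ^ (s.card - t.card) * y ^ (t ∩ D).card
      = (p * y + (1 - p)) ^ (s ∩ D).card := by
  have h := s.sum_powerset_bernoulli_mul_prod p fun e => if e ∈ D then y else 1
  simp only [prod_ite_mem, prod_const, mul_ite, mul_one] at h
  rw [h, ← prod_const, ← prod_ite_mem]
  exact prod_congr rfl fun e _ => by split_ifs <;> ring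

end Powerset

section Sampling

variable {n : ℕ} {E0 : Finset (Sym2 (Fin n))} {p : ℝ}

theorem probE_add_probE_not (A : Finset (Sym2 (Fin n)) → Prop) :
    probE E0 p A + probE E0 p (fun F => ¬ A F) = 1 := by
  rw [probE, probE, ← sum_add_distrib]
  refine (sum_congr rfl fun F _ => ?_).trans (E0.sum_powerset_bernoulli p)
  split_ifs <;> simp_all

theorem probE_mono (hp0 : 0 ≤ p) (hp1 : p ≤ 1) {A B : Finset (Sym2 (Fin n)) → Prop}
    (h : ∀ F ⊆ E0, A F → B F) : probE E0 p A ≤ probE E0 p B := by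
  refine sum_le_sum fun F hF => ?_
  have hw : 0 ≤ p ^ F.card * (1 - p) ^ (E0.card - F.card) :=
    mul_nonneg (pow_nonneg hp0 _) (pow_nonneg (sub_nonneg.2 hp1) _)
  by_cases hA : A F
  · rw [if_pos hA, if_pos (h F (mem_powerset.1 hF) hA)]
  · rw [if_neg hA]; split_ifs <;> simp [hw]

theorem probE_exists_le_sum (hp0 : 0 ≤ p) (hp1 : p ≤ 1) {ι : Type*} (s : Finset ι)
    (B : ι → Finset (Sym2 (Fin n)) → Prop) :
    probE E0 p (fun F => ∃ i ∈ s, B i F) ≤ ∑ i ∈ s, probE E0 p (B i) := by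
  simp only [probE]
  rw [sum_comm]
  refine sum_le_sum fun F _ => ?_
  have hw : 0 ≤ p ^ F.card * (1 - p) ^ (E0.card - F.card) :=
    mul_nonneg (pow_nonneg hp0 _) (pow_nonneg (sub_nonneg.2 hp1) _)
  have hterm : ∀ i ∈ s, 0 ≤ if B i F then p ^ F.card * (1 - p) ^ (E0.card - F.card) else 0 :=
    fun i _ => by split_ifs <;> simp [hw]
  split_ifs with hB
  · obtain ⟨i, hi, hBi⟩ := hB
    simpa [hBi] using single_le_sum hterm hi
  · exact sum_nonneg hterm

theorem probE_lt_card_inter_le (hp0 : 0 ≤ p) (hp1 : p ≤ 1) (D : Finset (Sym2 (Fin n)))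
    {x : ℝ} (hx : 1 ≤ x) (τ : ℝ) :
    probE E0 p (fun F => τ < (F ∩ D).card)
      ≤ x ^ (-τ) * (p * x + (1 - p)) ^ (E0 ∩ D).card := by
  rw [← E0.sum_powerset_bernoulli_mul_pow_card_inter D, mul_sum, probE]
  refine sum_le_sum fun F _ => ?_
  have hw : 0 ≤ p ^ F.card * (1 - p) ^ (E0.card - F.card) :=
    mul_nonneg (pow_nonneg hp0 _) (pow_nonneg (sub_nonneg.2 hp1) _)
  have hx0 : 0 < x := by linarith
  split_ifs with hτ
  · have hone : 1 ≤ x ^ (-τ) * x ^ (F ∩ D).card := by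
      rw [← Real.rpow_natCast, ← Real.rpow_add hx0]
      exact Real.one_le_rpow hx (by linarith)
    nlinarith
  · positivity

theorem probE_chernoff (hp0 : 0 ≤ p) (hp1 : p ≤ 1) {D : Finset (Sym2 (Fin n))} (hD : D ⊆ E0)
    {ε r : ℝ} (hε : 0 < ε) (hr : 0 ≤ r) :
    probE E0 p (fun F => (1 + ε) * p * D.card + r < (F ∩ D).card)
      ≤ Real.exp (-(ε * r / (1 + ε))) := by
  set τ := (1 + ε) * p * D.card + r
  have hτ : 0 ≤ τ := by positivity
  have hε1 : 0 < 1 + ε := by linarith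
  have hlog : ε / (1 + ε) ≤ Real.log (1 + ε) := by
    have := Real.one_sub_inv_le_log_of_pos hε1
    rwa [show 1 - (1 + ε)⁻¹ = ε / (1 + ε) by field_simp; ring] at this
  have hpow : (1 + ε) ^ (-τ) ≤ Real.exp (ε / (1 + ε) * -τ) := by
    rw [Real.rpow_def_of_pos hε1]
    exact Real.exp_le_exp.2 (mul_le_mul_of_nonpos_right hlog (by linarith))
  have hbase : 0 ≤ p * (1 + ε) + (1 - p) := by nlinarith
  have hmgf : (p * (1 + ε) + (1 - p)) ^ D.card ≤ Real.exp (ε * p) ^ D.card := by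
    have := Real.add_one_le_exp (ε * p)
    exact pow_le_pow_left₀ hbase (by linarith) _
  calc probE E0 p (fun F => τ < (F ∩ D).card)
      ≤ (1 + ε) ^ (-τ) * (p * (1 + ε) + (1 - p)) ^ D.card := by
        have := probE_lt_card_inter_le (E0 := E0) hp0 hp1 D (x := 1 + ε) (by linarith) τ
        rwa [inter_eq_right.2 hD] at this
    _ ≤ Real.exp (ε / (1 + ε) * -τ) * Real.exp (ε * p) ^ D.card :=
        mul_le_mul hpow hmgf (pow_nonneg hbase _) (Real.exp_nonneg _)
    _ = Real.exp (-(ε * r / (1 + ε))) := by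
        rw [← Real.exp_nat_mul, ← Real.exp_add]
        congr 1
        field_simp
        ring

end Sampling

section Peeling

variable {n : ℕ} {E0 F : Finset (Sym2 (Fin n))} {S T : Finset (Fin n)} {u v : Fin n}

def incEdges (F : Finset (Sym2 (Fin n))) (S : Finset (Fin n)) (u : Fin n) :
    Finset (Sym2 (Fin n)) :=
  (S.filter fun w => w ≠ u ∧ s(u, w) ∈ F).image (s(u, ·))

theorem card_incEdges : (incEdges F S u).card = edegIn F S u :=
  card_image_of_injOn fun _ _ _ _ h => Sym2.congr_right.1 h

theorem incEdges_subset : incEdges F S u ⊆ F := by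
  intro e
  simp only [incEdges, mem_image, mem_filter]
  rintro ⟨w, ⟨-, -, hw⟩, rfl⟩
  exact hw

theorem edegIn_mono (h : S ⊆ T) : edegIn F S u ≤ edegIn F T u :=
  card_le_card (filter_subset_filter _ h)

theorem inter_incEdges (h : F ⊆ E0) : F ∩ incEdges E0 S u = incEdges F S u := by
  ext e
  simp only [incEdges, mem_inter, mem_image, mem_filter]
  constructor
  · rintro ⟨he, w, ⟨hw, hwu, -⟩, rfl⟩
    exact ⟨w, ⟨hw, hwu, he⟩, rfl⟩
  · rintro ⟨w, ⟨hw, hwu, he⟩, rfl⟩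
    exact ⟨he, w, ⟨hw, hwu, h he⟩, rfl⟩

theorem emindegIn_le_edegIn (hu : u ∈ S) : emindegIn F S ≤ edegIn F S u := by
  rw [emindegIn, dif_pos ⟨u, hu⟩]
  exact inf'_le _ hu

theorem exists_edegIn_eq_emindegIn (F : Finset (Sym2 (Fin n))) (hS : S.Nonempty) :
    ∃ u ∈ S, edegIn F S u = emindegIn F S := by
  obtain ⟨u, hu, h⟩ := S.exists_mem_eq_inf' hS (edegIn F S)
  exact ⟨u, hu, by rw [emindegIn, dif_pos hS, h]⟩

theorem emindegIn_le_coreE (hv : v ∈ S) : emindegIn F S ≤ coreE F v :=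
  le_sup (by simpa using hv)

theorem exists_emindegIn_eq_coreE (F : Finset (Sym2 (Fin n))) (v : Fin n) :
    ∃ S, v ∈ S ∧ emindegIn F S = coreE F v := by
  obtain ⟨S, hS, h⟩ :=
    (univ.powerset.filter fun S => v ∈ S).exists_mem_eq_sup ⟨{v}, by simp⟩ (emindegIn F)
  exact ⟨S, (mem_filter.1 hS).2, h.symm⟩

noncomputable def minDegVertex (F : Finset (Sym2 (Fin n))) (S : Finset (Fin n))
    (hS : S.Nonempty) : Fin n :=
  (exists_edegIn_eq_emindegIn F hS).choose

theorem minDegVertex_mem (hS : S.Nonempty) : minDegVertex F S hS ∈ S :=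
  (exists_edegIn_eq_emindegIn F hS).choose_spec.1

theorem edegIn_minDegVertex (hS : S.Nonempty) :
    edegIn F S (minDegVertex F S hS) = emindegIn F S :=
  (exists_edegIn_eq_emindegIn F hS).choose_spec.2

noncomputable def peel (E0 : Finset (Sym2 (Fin n))) : ℕ → Finset (Fin n)
  | 0 => univ
  | i + 1 =>
    if h : (peel E0 i).Nonempty then (peel E0 i).erase (minDegVertex E0 (peel E0 i) h) else ∅

noncomputable def forwardEdges (E0 : Finset (Sym2 (Fin n))) (i : ℕ) : Finset (Sym2 (Fin n)) :=
  if h : (peel E0 i).Nonempty then incEdges E0 (peel E0 i) (minDegVertex E0 (peel E0 i) h)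
  else ∅

theorem card_peel_le (E0 : Finset (Sym2 (Fin n))) (i : ℕ) : (peel E0 i).card ≤ n - i := by
  induction i with
  | zero => simp [peel]
  | succ i ih =>
    rw [peel]
    split_ifs with h
    · rw [card_erase_of_mem (minDegVertex_mem h)]
      omega
    · simp

theorem forwardEdges_subset (E0 : Finset (Sym2 (Fin n))) (i : ℕ) : forwardEdges E0 i ⊆ E0 := by
  rw [forwardEdges]
  split_ifs
  exacts [incEdges_subset, empty_subset _]

theorem card_forwardEdges (E0 : Finset (Sym2 (Fin n))) (i : ℕ) :
    (forwardEdges E0 i).card = emindegIn E0 (peel E0 i) := by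
  rw [forwardEdges]
  split_ifs with h
  · rw [card_incEdges, edegIn_minDegVertex]
  · simp [emindegIn, h]

theorem exists_peel_minDegVertex_mem (E0 : Finset (Sym2 (Fin n))) (hS : S.Nonempty) :
    ∃ i, ∃ h : (peel E0 i).Nonempty,
      S ⊆ peel E0 i ∧ minDegVertex E0 (peel E0 i) h ∈ S := by
  -- otherwise `S` would survive all `n` rounds of peeling
  by_contra! hnot
  have hsub : ∀ i, S ⊆ peel E0 i := by
    intro i
    induction i with
    | zero => exact subset_univ S
    | succ i ih =>
      have h := hS.mono ih
      rw [peel, dif_pos h]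
      exact fun w hw => mem_erase.2 ⟨fun hwu => hnot i h ih (hwu ▸ hw), ih hw⟩
  have := card_le_card (hsub n)
  have := card_peel_le E0 n
  have := hS.card_pos
  omega

theorem coreE_le_of_card_inter_forwardEdges_le (hF : F ⊆ E0) {a r : ℝ} (ha : 0 ≤ a)
    (h : ∀ i < n, ((F ∩ forwardEdges E0 i).card : ℝ) ≤ a * (forwardEdges E0 i).card + r)
    (v : Fin n) : (coreE F v : ℝ) ≤ a * coreE E0 v + r := by
  obtain ⟨S, hvS, hcore⟩ := exists_emindegIn_eq_coreE F v
  obtain ⟨i, hne, hSi, hu⟩ := exists_peel_minDegVertex_mem E0 ⟨v, hvS⟩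
  have hi : i < n := by
    have := card_peel_le E0 i
    have := hne.card_pos
    omega
  have hF_le : coreE F v ≤ (F ∩ forwardEdges E0 i).card := by
    rw [forwardEdges, dif_pos hne, inter_incEdges hF, ← hcore, card_incEdges]
    exact (emindegIn_le_edegIn hu).trans (edegIn_mono hSi)
  have hE0_ge : (forwardEdges E0 i).card ≤ coreE E0 v := by
    rw [card_forwardEdges]
    exact emindegIn_le_coreE (hSi hvS)
  calc (coreE F v : ℝ) ≤ (F ∩ forwardEdges E0 i).card := by exact_mod_cast hF_le
    _ ≤ a * (forwardEdges E0 i).card + r := h i hi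
    _ ≤ a * coreE E0 v + r := by gcongr

end Peeling

theorem natCast_mul_exp_neg_two_mul_log (n : ℕ) :
    (n : ℝ) * Real.exp (-(2 * Real.log n)) = (n : ℝ) ^ (-1 : ℝ) := by
  rcases n.eq_zero_or_pos with rfl | hn
  · simp
  · have hn' : (0 : ℝ) < n := by exact_mod_cast hn
    rw [Real.rpow_neg_one, Real.exp_neg, ← Real.log_rpow hn', Real.exp_log (by positivity),
      Real.rpow_two]
    field_simp

/-- Sampling each edge independently with probability `p`, with high probability every
vertex satisfies `core(G_p, v) ≤ (1 + ε)·p·core(G, v) + O(log n / ε)`. -/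
theorem core_sample_upper_whp :
    ∃ C c : ℝ, 0 < C ∧ 0 < c ∧
      ∀ (n : ℕ) (G : SimpleGraph (Fin n)) [DecidableRel G.Adj] (p ε : ℝ),
        0 < p → p < 1 → 0 < ε → ε < 1 →
        1 - (n : ℝ) ^ (-c) ≤
          probE G.edgeFinset p (fun F => ∀ v : Fin n,
            (coreE F v : ℝ) ≤ (1 + ε) * p * (coreE G.edgeFinset v : ℝ)
              + C * Real.log n / ε) := by
  refine ⟨4, 1, by norm_num, by norm_num, fun n G _ p ε hp0 hp1 hε0 hε1 => ?_⟩
  set E0 := G.edgeFinset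
  set r := 4 * Real.log n / ε
  set Good := fun F => ∀ v : Fin n, (coreE F v : ℝ) ≤ (1 + ε) * p * coreE E0 v + r
  set Bad := fun i F =>
    (1 + ε) * p * (forwardEdges E0 i).card + r < (F ∩ forwardEdges E0 i).card
  have hlog := Real.log_natCast_nonneg n
  have hr : 0 ≤ r := by positivity
  -- since `ε < 1`, `ε r / (1 + ε) = 4 log n / (1 + ε) ≥ 2 log n`
  have hbad (i : ℕ) : probE E0 p (Bad i) ≤ Real.exp (-(2 * Real.log n)) := by
    refine (probE_chernoff hp0.le hp1.le (forwardEdges_subset E0 i) hε0 hr).trans ?_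
    rw [Real.exp_le_exp, neg_le_neg_iff, le_div_iff₀ (by linarith),
      show ε * r = 4 * Real.log n by simp only [r]; field_simp]
    nlinarith
  have hunion : probE E0 p (fun F => ¬ Good F) ≤ ∑ i ∈ range n, probE E0 p (Bad i) := by
    refine (probE_mono hp0.le hp1.le fun F hF hF_bad => ?_).trans
      (probE_exists_le_sum hp0.le hp1.le _ _)
    by_contra! hgood
    exact hF_bad (coreE_le_of_card_inter_forwardEdges_le hF (by positivity)
      fun i hi => not_lt.1 (hgood i (mem_range.2 hi)))
  have hsum := sum_le_card_nsmul (range n) (fun i => probE E0 p (Bad i)) _ fun i _ => hbad i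
  rw [card_range, nsmul_eq_mul, natCast_mul_exp_neg_two_mul_log] at hsum
  linarith [probE_add_probE_not (E0 := E0) (p := p) Good]
end

section
/- Let G = (V, E) be an undirected graph on n vertices and G_p the random subgraph keeping each edge independently with probability p ∈ (0, 1). Then with high probability the arboricity satisfies λ(G_p) ∈ [(1 − ε)·p·λ(G) − O(log n / ε), (1 + ε)·p·λ(G) + O(log n / ε)]. -/
open Finset
open scoped NNRat Classical

/-!
For a vertex set `S` with `|S| ≥ 2`, the number of sampled edges inside `S` is binomial with
mean `p·|E[S]|`, and Nash-Williams gives `|E[S]| ≤ λ(G)(|S| − 1)`, with equality up to `|S| − 1`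
for a maximising `S`. A Chernoff bound with additive slack `Θ(|S| log n / ε)` makes the upper
deviation on `S` have probability at most `n^{-(2|S|+5)}`, which survives a union bound over all
`S` because `∑_S n^{-2|S|} ≤ (1 + n^{-2})^n ≤ 2`. The lower bound needs only one maximising set
of `G`.
-/

namespace ArboricitySample

variable {n : ℕ}

open Real

noncomputable def keepWeight (E0 : Finset (Sym2 (Fin n))) (p : ℝ)
    (F : Finset (Sym2 (Fin n))) : ℝ :=
  p ^ #F * (1 - p) ^ (#E0 - #F)

section Sampling

variable {E0 : Finset (Sym2 (Fin n))} {p : ℝ}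

lemma probE_eq_sum_keepWeight (A : Finset (Sym2 (Fin n)) → Prop) :
    probE E0 p A = ∑ F ∈ E0.powerset, if A F then keepWeight E0 p F else 0 :=
  rfl

lemma keepWeight_nonneg (hp0 : 0 ≤ p) (hp1 : p ≤ 1) (F : Finset (Sym2 (Fin n))) :
    0 ≤ keepWeight E0 p F :=
  mul_nonneg (pow_nonneg hp0 _) (pow_nonneg (sub_nonneg.mpr hp1) _)

lemma sum_keepWeight (E0 : Finset (Sym2 (Fin n))) (p : ℝ) :
    ∑ F ∈ E0.powerset, keepWeight E0 p F = 1 :=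
  (sum_pow_mul_eq_add_pow p (1 - p) E0).trans (by rw [add_sub_cancel, one_pow])

lemma sum_keepWeight_mul_pow_card_inter {E1 : Finset (Sym2 (Fin n))} (hE : E1 ⊆ E0) (z : ℝ) :
    ∑ F ∈ E0.powerset, keepWeight E0 p F * z ^ #(F ∩ E1) = (1 - p + p * z) ^ #E1 := by
  have h := prod_add (fun e => p * if e ∈ E1 then z else 1) (fun _ => 1 - p) E0
  have hfactor : ∀ e, (p * if e ∈ E1 then z else 1) + (1 - p)
      = if e ∈ E1 then 1 - p + p * z else 1 := by
    intro e; split_ifs <;> ring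
  simp only [hfactor, prod_ite_mem, inter_eq_right.mpr hE, prod_const] at h
  rw [h]
  refine sum_congr rfl fun F hF => ?_
  simp only [prod_mul_distrib, prod_ite_mem, prod_const]
  rw [card_sdiff_of_subset (mem_powerset.mp hF), keepWeight]
  ring

lemma probE_of_forall {A : Finset (Sym2 (Fin n)) → Prop} (hA : ∀ F, A F) :
    probE E0 p A = 1 := by
  simp [probE_eq_sum_keepWeight, hA, sum_keepWeight]

lemma probE_not (A : Finset (Sym2 (Fin n)) → Prop) :
    probE E0 p (fun F => ¬ A F) = 1 - probE E0 p A := by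
  rw [eq_sub_iff_add_eq, probE_eq_sum_keepWeight, probE_eq_sum_keepWeight,
    ← sum_add_distrib, ← sum_keepWeight E0 p]
  exact sum_congr rfl fun F _ => by by_cases hA : A F <;> simp [hA]

lemma probE_mono (hp0 : 0 ≤ p) (hp1 : p ≤ 1) {A B : Finset (Sym2 (Fin n)) → Prop}
    (hAB : ∀ F ⊆ E0, A F → B F) : probE E0 p A ≤ probE E0 p B :=
  sum_le_sum fun F hF => by
    by_cases hA : A F
    · simp [hA, hAB F (mem_powerset.mp hF) hA]
    · rw [if_neg hA]
      exact ite_nonneg (keepWeight_nonneg hp0 hp1 F) le_rfl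

lemma probE_or_le (hp0 : 0 ≤ p) (hp1 : p ≤ 1) (A B : Finset (Sym2 (Fin n)) → Prop) :
    probE E0 p (fun F => A F ∨ B F) ≤ probE E0 p A + probE E0 p B := by
  rw [probE_eq_sum_keepWeight, probE_eq_sum_keepWeight, probE_eq_sum_keepWeight,
    ← sum_add_distrib]
  refine sum_le_sum fun F _ => ?_
  have := keepWeight_nonneg (E0 := E0) hp0 hp1 F
  by_cases hA : A F <;> by_cases hB : B F <;> simp [hA, hB, this]

lemma probE_exists_mem_le_sum {ι : Type*} (hp0 : 0 ≤ p) (hp1 : p ≤ 1) (T : Finset ι)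
    (B : ι → Finset (Sym2 (Fin n)) → Prop) :
    probE E0 p (fun F => ∃ i ∈ T, B i F) ≤ ∑ i ∈ T, probE E0 p (B i) := by
  rw [probE_eq_sum_keepWeight]
  simp_rw [probE_eq_sum_keepWeight]
  rw [sum_comm]
  refine sum_le_sum fun F _ => ?_
  have hw := keepWeight_nonneg (E0 := E0) hp0 hp1 F
  split_ifs with h
  · obtain ⟨i, hi, hB⟩ := h
    calc keepWeight E0 p F = if B i F then keepWeight E0 p F else 0 := by simp [hB]
      _ ≤ ∑ j ∈ T, if B j F then keepWeight E0 p F else 0 :=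
        single_le_sum (f := fun j => if B j F then keepWeight E0 p F else 0)
          (fun j _ => ite_nonneg hw le_rfl) hi
  · exact sum_nonneg fun j _ => ite_nonneg hw le_rfl

end Sampling

section Chernoff

variable {E0 E1 : Finset (Sym2 (Fin n))} {p : ℝ}

lemma probE_le_exp (hE : E1 ⊆ E0) (hp0 : 0 ≤ p) (hp1 : p ≤ 1)
    {A : Finset (Sym2 (Fin n)) → Prop} (θ a : ℝ)
    (hA : ∀ F ⊆ E0, A F → θ * a ≤ θ * #(F ∩ E1)) :
    probE E0 p A ≤ exp (p * #E1 * (exp θ - 1) - θ * a) := by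
  have hmgf : (1 - p + p * exp θ) ^ #E1 ≤ exp (p * #E1 * (exp θ - 1)) := by
    rw [show p * #E1 * (exp θ - 1) = #E1 * (p * (exp θ - 1)) by ring, exp_nat_mul]
    exact pow_le_pow_left₀ (by nlinarith [exp_pos θ])
      (by linarith [add_one_le_exp (p * (exp θ - 1))]) _
  calc probE E0 p A
      ≤ ∑ F ∈ E0.powerset, exp (-(θ * a)) * (keepWeight E0 p F * exp θ ^ #(F ∩ E1)) := by
        rw [probE_eq_sum_keepWeight]
        refine sum_le_sum fun F hF => ?_
        have hw := keepWeight_nonneg (E0 := E0) hp0 hp1 F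
        split_ifs with hAF
        · have hexp : 1 ≤ exp (-(θ * a)) * exp θ ^ #(F ∩ E1) := by
            rw [← exp_nat_mul, ← exp_add, one_le_exp_iff]
            linarith [hA F (mem_powerset.mp hF) hAF]
          calc keepWeight E0 p F = keepWeight E0 p F * 1 := (mul_one _).symm
            _ ≤ keepWeight E0 p F * (exp (-(θ * a)) * exp θ ^ #(F ∩ E1)) := by gcongr
            _ = _ := by ring
        · positivity
    _ = exp (-(θ * a)) * (1 - p + p * exp θ) ^ #E1 := by
        rw [← mul_sum, sum_keepWeight_mul_pow_card_inter hE]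
    _ ≤ exp (-(θ * a)) * exp (p * #E1 * (exp θ - 1)) := by gcongr
    _ = exp (p * #E1 * (exp θ - 1) - θ * a) := by rw [← exp_add]; ring_nf

lemma probE_upper_tail_le (hE : E1 ⊆ E0) (hp0 : 0 ≤ p) (hp1 : p ≤ 1) {ε t a : ℝ}
    (hε0 : 0 ≤ ε) (hε1 : ε ≤ 1) (ht : 0 ≤ t) (ha : (1 + ε) * (p * #E1) + t ≤ a) :
    probE E0 p (fun F => a ≤ #(F ∩ E1)) ≤ exp (-(ε * t / 2)) := by
  have hlog : ε / (1 + ε) ≤ log (1 + ε) := by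
    have := one_sub_inv_le_log_of_pos (show 0 < 1 + ε by linarith)
    rwa [show 1 - (1 + ε)⁻¹ = ε / (1 + ε) by field_simp; ring] at this
  have hlog0 : 0 ≤ log (1 + ε) := log_nonneg (by linarith)
  have hμ : 0 ≤ p * #E1 := by positivity
  refine (probE_le_exp hE hp0 hp1 (log (1 + ε)) a
    fun F _ hF => mul_le_mul_of_nonneg_left hF hlog0).trans (exp_le_exp.mpr ?_)
  rw [exp_log (by linarith), add_sub_cancel_left]
  have key : ε * (p * #E1) + ε * t / 2 ≤ ε / (1 + ε) * a := by
    rw [div_mul_eq_mul_div, le_div_iff₀ (by linarith)]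
    nlinarith [mul_nonneg hε0 ht, mul_nonneg (mul_nonneg hε0 hε0) ht]
  nlinarith [mul_le_mul_of_nonneg_right hlog (le_trans (by positivity) ha : 0 ≤ a)]

lemma probE_lower_tail_le (hE : E1 ⊆ E0) (hp0 : 0 ≤ p) (hp1 : p ≤ 1) {ε t a : ℝ}
    (hε0 : 0 ≤ ε) (hε1 : ε < 1) (ht : 0 ≤ t) (ha : a ≤ (1 - ε) * (p * #E1) - t) :
    probE E0 p (fun F => (#(F ∩ E1) : ℝ) ≤ a) ≤ exp (-(ε * t)) := by
  have hpos : 0 < 1 - ε := by linarith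
  have hlog_le : log (1 - ε) ≤ -ε := by linarith [log_le_sub_one_of_pos hpos]
  have hlog_ge : -(ε / (1 - ε)) ≤ log (1 - ε) := by
    have := one_sub_inv_le_log_of_pos hpos
    rwa [show 1 - (1 - ε)⁻¹ = -(ε / (1 - ε)) by field_simp; ring] at this
  have hlog_ge' : -ε ≤ (1 - ε) * log (1 - ε) := by
    have := mul_le_mul_of_nonneg_left hlog_ge hpos.le
    rwa [mul_neg, mul_div_cancel₀ _ hpos.ne'] at this
  have hμ : 0 ≤ p * #E1 := by positivity
  refine (probE_le_exp hE hp0 hp1 (log (1 - ε)) a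
    fun F _ hF => mul_le_mul_of_nonpos_left hF (by linarith)).trans (exp_le_exp.mpr ?_)
  rw [exp_log hpos, sub_sub_cancel_left]
  nlinarith [mul_le_mul_of_nonpos_left ha (show log (1 - ε) ≤ 0 by linarith),
    mul_le_mul_of_nonneg_left hlog_ge' hμ, mul_le_mul_of_nonneg_left hlog_le ht]

end Chernoff

section NashWilliams

def nashWilliamsSets (n : ℕ) : Finset (Finset (Fin n)) :=
  (univ : Finset (Fin n)).powerset.filter fun S => 2 ≤ #S

def nashWilliamsRatio (F : Finset (Sym2 (Fin n))) (S : Finset (Fin n)) : ℕ :=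
  ⌈(#(F ∩ S.sym2) : ℚ) / ((#S : ℚ) - 1)⌉₊

variable {F : Finset (Sym2 (Fin n))} {S : Finset (Fin n)}

lemma mem_nashWilliamsSets : S ∈ nashWilliamsSets n ↔ 2 ≤ #S := by
  simp [nashWilliamsSets]

lemma arbE_eq_sup : arbE F = (nashWilliamsSets n).sup (nashWilliamsRatio F) :=
  rfl

lemma card_inter_sym2_le_mul (hS : 2 ≤ #S) {m : ℕ} (h : nashWilliamsRatio F S ≤ m) :
    (#(F ∩ S.sym2) : ℝ) ≤ m * (#S - 1) := by
  have hden : (0 : ℚ) < #S - 1 := by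
    have : (2 : ℚ) ≤ #S := by exact_mod_cast hS
    linarith
  have hq : (#(F ∩ S.sym2) : ℚ) ≤ m * (#S - 1) := (div_le_iff₀ hden).mp (Nat.ceil_le.mp h)
  exact_mod_cast hq

lemma card_inter_sym2_le_arbE_mul (hS : 2 ≤ #S) :
    (#(F ∩ S.sym2) : ℝ) ≤ arbE F * (#S - 1) :=
  card_inter_sym2_le_mul hS (le_sup (mem_nashWilliamsSets.mpr hS))

lemma nashWilliamsRatio_sub_one_mul_le (hS : 2 ≤ #S) :
    ((nashWilliamsRatio F S : ℝ) - 1) * (#S - 1) ≤ #(F ∩ S.sym2) := by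
  have hden : (0 : ℚ) < #S - 1 := by
    have : (2 : ℚ) ≤ #S := by exact_mod_cast hS
    linarith
  have hceil := Nat.ceil_lt_add_one (div_nonneg (Nat.cast_nonneg (α := ℚ) #(F ∩ S.sym2)) hden.le)
  have hq : ((nashWilliamsRatio F S : ℚ) - 1) * (#S - 1) ≤ #(F ∩ S.sym2) := by
    rw [← le_div_iff₀ hden]
    exact (sub_lt_iff_lt_add.mpr hceil).le
  exact_mod_cast hq

lemma exists_arbE_sub_one_mul_le (hn : 2 ≤ n) (F : Finset (Sym2 (Fin n))) :
    ∃ S : Finset (Fin n), 2 ≤ #S ∧ ((arbE F : ℝ) - 1) * (#S - 1) ≤ #(F ∩ S.sym2) := by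
  have hne : (nashWilliamsSets n).Nonempty :=
    ⟨univ, mem_nashWilliamsSets.mpr (by simpa using hn)⟩
  obtain ⟨S, hS, hsup⟩ := exists_mem_eq_sup _ hne (nashWilliamsRatio F)
  have hS2 := mem_nashWilliamsSets.mp hS
  exact ⟨S, hS2, by rw [arbE_eq_sup, hsup]; exact nashWilliamsRatio_sub_one_mul_le hS2⟩

lemma arbE_eq_zero_of_lt_two (hn : n < 2) (F : Finset (Sym2 (Fin n))) : arbE F = 0 := by
  have hempty : nashWilliamsSets n = ∅ := by
    refine eq_empty_of_forall_notMem fun S hS => ?_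
    have := card_le_univ S
    have := mem_nashWilliamsSets.mp hS
    simp only [Fintype.card_fin] at *
    omega
  rw [arbE_eq_sup, hempty, sup_empty]
  rfl

end NashWilliams

section Tails

lemma exp_neg_le_inv_pow (hn : 1 ≤ n) {k : ℕ} {x : ℝ} (hk : k * log n ≤ x) :
    exp (-x) ≤ (n : ℝ)⁻¹ ^ k := by
  have hn0 : (0 : ℝ) < n := by exact_mod_cast hn
  calc exp (-x) ≤ exp (-(k * log n)) := exp_le_exp.mpr (neg_le_neg hk)
    _ = (n : ℝ)⁻¹ ^ k := by rw [exp_neg, exp_nat_mul, exp_log hn0, inv_pow]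

lemma sum_inv_sq_pow_card_le_two (hn : 2 ≤ n) (T : Finset (Finset (Fin n))) :
    ∑ S ∈ T, ((n : ℝ)⁻¹ ^ 2) ^ #S ≤ 2 := by
  have hn0 : (0 : ℝ) < n := by positivity
  have hn2 : (2 : ℝ) ≤ n := by exact_mod_cast hn
  calc ∑ S ∈ T, ((n : ℝ)⁻¹ ^ 2) ^ #S
      ≤ ∑ S ∈ (univ : Finset (Fin n)).powerset,
          ((n : ℝ)⁻¹ ^ 2) ^ #S * 1 ^ (#(univ : Finset (Fin n)) - #S) := by
        simp only [one_pow, mul_one]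
        exact sum_le_sum_of_subset_of_nonneg (fun S _ => mem_powerset.mpr (subset_univ S))
          fun _ _ _ => by positivity
    _ = ((n : ℝ)⁻¹ ^ 2 + 1) ^ n := by rw [sum_pow_mul_eq_add_pow, card_univ, Fintype.card_fin]
    _ ≤ exp ((n : ℝ)⁻¹ ^ 2) ^ n := by gcongr; exact add_one_le_exp _
    _ = exp (n : ℝ)⁻¹ := by rw [← exp_nat_mul]; field_simp
    _ ≤ exp (log 2) := by
        refine exp_le_exp.mpr ?_
        have : (n : ℝ)⁻¹ ≤ 1 / 2 := by rw [inv_le_comm₀ hn0 (by norm_num)]; linarith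
        linarith [log_two_gt_d9]
    _ = 2 := exp_log two_pos

lemma one_le_two_mul_log_div (hn : 2 ≤ n) {ε : ℝ} (hε0 : 0 < ε) (hε1 : ε ≤ 1) :
    1 ≤ 2 * log n / ε := by
  have : log 2 ≤ log n := log_le_log two_pos (by exact_mod_cast hn)
  rw [le_div_iff₀ hε0]
  linarith [log_two_gt_d9]

variable {E0 : Finset (Sym2 (Fin n))} {p ε : ℝ}

lemma probE_card_inter_sym2_ge_le (hn : 2 ≤ n) (hp0 : 0 ≤ p) (hp1 : p ≤ 1) (hε0 : 0 < ε)
    (hε1 : ε ≤ 1) {S : Finset (Fin n)} (hS : 2 ≤ #S) :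
    probE E0 p (fun F => (#S - 1) * ((1 + ε) * p * arbE E0 + 24 * log n / ε - 1)
      ≤ #(F ∩ (E0 ∩ S.sym2))) ≤ (n : ℝ)⁻¹ ^ (2 * #S + 5) := by
  have hs : (2 : ℝ) ≤ #S := by exact_mod_cast hS
  -- The slack `24 log n / ε` splits into `22 log n / ε` of Chernoff deviation and
  -- `2 log n / ε ≥ 1`, which pays for the `- 1` lost to the ceiling in `nashWilliamsRatio`.
  have hslack := one_le_two_mul_log_div hn hε0 hε1
  have hdense := card_inter_sym2_le_arbE_mul (F := E0) hS
  refine (probE_upper_tail_le inter_subset_left hp0 hp1 hε0.le hε1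
    (t := (#S - 1) * (22 * log n / ε)) (mul_nonneg (by linarith) (by positivity)) ?_).trans
    (exp_neg_le_inv_pow (one_le_two.trans hn) ?_)
  · have := mul_le_mul_of_nonneg_left hdense (by positivity : 0 ≤ (1 + ε) * p)
    have : 22 * log n / ε ≤ 24 * log n / ε - 1 := by
      rw [show 24 * log n / ε = 22 * log n / ε + 2 * log n / ε by ring]; linarith
    nlinarith
  · rw [show ε * ((#S - 1) * (22 * log n / ε)) / 2 = 11 * (#S - 1) * log n by
      field_simp; ring]
    push_cast
    nlinarith [log_natCast_nonneg n]

lemma probE_lt_arbE_le (hn : 2 ≤ n) (hp0 : 0 ≤ p) (hp1 : p ≤ 1) (hε0 : 0 < ε)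
    (hε1 : ε ≤ 1) :
    probE E0 p (fun F => (1 + ε) * p * arbE E0 + 24 * log n / ε < arbE F)
      ≤ 2 * (n : ℝ)⁻¹ ^ 5 := by
  set U := (1 + ε) * p * arbE E0 + 24 * log n / ε
  calc probE E0 p (fun F => U < arbE F)
      ≤ probE E0 p (fun F => ∃ S ∈ nashWilliamsSets n,
          (#S - 1) * (U - 1) ≤ #(F ∩ (E0 ∩ S.sym2))) := by
        refine probE_mono hp0 hp1 fun F hF hU => ?_
        obtain ⟨S, hS, hdense⟩ := exists_arbE_sub_one_mul_le hn F
        have hs : (2 : ℝ) ≤ #S := by exact_mod_cast hS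
        refine ⟨S, mem_nashWilliamsSets.mpr hS, ?_⟩
        rw [← inter_assoc, inter_eq_left.mpr hF]
        nlinarith
    _ ≤ ∑ S ∈ nashWilliamsSets n, probE E0 p (fun F =>
          (#S - 1) * (U - 1) ≤ #(F ∩ (E0 ∩ S.sym2))) :=
        probE_exists_mem_le_sum hp0 hp1 _ _
    _ ≤ ∑ S ∈ nashWilliamsSets n, (n : ℝ)⁻¹ ^ 5 * ((n : ℝ)⁻¹ ^ 2) ^ #S :=
        sum_le_sum fun S hS => by
          rw [← pow_mul, ← pow_add, add_comm]
          exact probE_card_inter_sym2_ge_le hn hp0 hp1 hε0 hε1 (mem_nashWilliamsSets.mp hS)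
    _ ≤ (n : ℝ)⁻¹ ^ 5 * 2 := by
        rw [← mul_sum]; gcongr; exact sum_inv_sq_pow_card_le_two hn _
    _ = 2 * (n : ℝ)⁻¹ ^ 5 := mul_comm _ _

lemma probE_arbE_lt_le (hn : 2 ≤ n) (hp0 : 0 ≤ p) (hp1 : p ≤ 1) (hε0 : 0 < ε)
    (hε1 : ε < 1) :
    probE E0 p (fun F => (arbE F : ℝ) < (1 - ε) * p * arbE E0 - 24 * log n / ε)
      ≤ (n : ℝ)⁻¹ ^ 5 := by
  set L := (1 - ε) * p * arbE E0 - 24 * log n / ε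
  obtain ⟨S, hS, hdense⟩ := exists_arbE_sub_one_mul_le hn E0
  have hs : (2 : ℝ) ≤ #S := by exact_mod_cast hS
  have hslack := one_le_two_mul_log_div hn hε0 hε1.le
  calc probE E0 p (fun F => (arbE F : ℝ) < L)
      ≤ probE E0 p (fun F => (#(F ∩ (E0 ∩ S.sym2)) : ℝ) ≤ (#S - 1) * L) := by
        refine probE_mono hp0 hp1 fun F hF hL => ?_
        rw [← inter_assoc, inter_eq_left.mpr hF]
        nlinarith [card_inter_sym2_le_arbE_mul (F := F) hS]
    _ ≤ exp (-(ε * ((#S - 1) * (22 * log n / ε)))) := by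
        refine probE_lower_tail_le inter_subset_left hp0 hp1 hε0.le hε1
          (mul_nonneg (by linarith) (by positivity)) ?_
        have := mul_le_mul_of_nonneg_left hdense (by nlinarith : 0 ≤ (1 - ε) * p)
        have : (1 - ε) * p ≤ 2 * log n / ε := by nlinarith
        have : 24 * log n / ε = 22 * log n / ε + 2 * log n / ε := by ring
        nlinarith
    _ ≤ (n : ℝ)⁻¹ ^ 5 := by
        refine exp_neg_le_inv_pow (one_le_two.trans hn) ?_
        rw [show ε * ((#S - 1) * (22 * log n / ε)) = 22 * (#S - 1) * log n by field_simp]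
        push_cast
        nlinarith [log_natCast_nonneg n]

end Tails

lemma one_sub_inv_sq_le_probE_arbE (hn : 2 ≤ n) (E0 : Finset (Sym2 (Fin n))) {p ε : ℝ}
    (hp0 : 0 ≤ p) (hp1 : p ≤ 1) (hε0 : 0 < ε) (hε1 : ε < 1) :
    1 - (n : ℝ)⁻¹ ^ 2 ≤ probE E0 p (fun F =>
      (1 - ε) * p * arbE E0 - 24 * log n / ε ≤ (arbE F : ℝ) ∧
        (arbE F : ℝ) ≤ (1 + ε) * p * arbE E0 + 24 * log n / ε) := by
  set L := (1 - ε) * p * arbE E0 - 24 * log n / ε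
  set U := (1 + ε) * p * arbE E0 + 24 * log n / ε
  have hν : (n : ℝ)⁻¹ ≤ 1 / 2 := by
    rw [inv_le_comm₀ (by positivity) (by norm_num), one_div, inv_inv]
    exact_mod_cast hn
  have hbad : probE E0 p (fun F => ¬ (L ≤ arbE F ∧ (arbE F : ℝ) ≤ U)) ≤ (n : ℝ)⁻¹ ^ 2 :=
    calc probE E0 p (fun F => ¬ (L ≤ arbE F ∧ (arbE F : ℝ) ≤ U))
        ≤ probE E0 p (fun F => (arbE F : ℝ) < L ∨ U < arbE F) :=
          probE_mono hp0 hp1 fun F _ hF => by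
            rcases not_and_or.mp hF with h | h
            exacts [Or.inl (not_le.mp h), Or.inr (not_le.mp h)]
      _ ≤ (n : ℝ)⁻¹ ^ 5 + 2 * (n : ℝ)⁻¹ ^ 5 :=
          (probE_or_le hp0 hp1 _ _).trans (add_le_add
            (probE_arbE_lt_le hn hp0 hp1 hε0 hε1) (probE_lt_arbE_le hn hp0 hp1 hε0 hε1.le))
      _ ≤ (n : ℝ)⁻¹ ^ 2 := by
          have : (n : ℝ)⁻¹ ^ 3 ≤ (1 / 2) ^ 3 := by gcongr
          nlinarith [pow_pos (show (0 : ℝ) < (n : ℝ)⁻¹ by positivity) 2]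
  rw [probE_not] at hbad
  linarith

end ArboricitySample

/-- Sampling each edge independently with probability `p`, with high probability the
arboricity satisfies
`λ(G_p) ∈ [(1 − ε)·p·λ(G) − O(log n / ε), (1 + ε)·p·λ(G) + O(log n / ε)]`. -/
theorem arboricity_sample_whp :
    ∃ C c : ℝ, 0 < C ∧ 0 < c ∧
      ∀ (n : ℕ) (G : SimpleGraph (Fin n)) [DecidableRel G.Adj] (p ε : ℝ),
        0 < p → p < 1 → 0 < ε → ε < 1 →
        1 - (n : ℝ) ^ (-c) ≤
          probE G.edgeFinset p (fun F =>
            (1 - ε) * p * (arbE G.edgeFinset : ℝ) - C * Real.log n / ε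
                ≤ (arbE F : ℝ) ∧
              (arbE F : ℝ) ≤
                (1 + ε) * p * (arbE G.edgeFinset : ℝ) + C * Real.log n / ε) := by
  refine ⟨24, 2, by norm_num, by norm_num, fun n G _ p ε hp0 hp1 hε0 hε1 => ?_⟩
  rcases lt_or_ge n 2 with hn | hn
  · have hlog : Real.log n = 0 := by interval_cases n <;> simp
    rw [ArboricitySample.probE_of_forall fun F => by
      simp [ArboricitySample.arbE_eq_zero_of_lt_two hn, hlog]]
    linarith [Real.rpow_nonneg (Nat.cast_nonneg n) (-2)]
  · rw [Real.rpow_neg (Nat.cast_nonneg _), Real.rpow_two, ← inv_pow]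
    exact ArboricitySample.one_sub_inv_sq_le_probE_arbE hn _ hp0.le hp1.le hε0 hε1
end

section
/- In the parallel token-dropping process on a directed graph where every vertex has out-degree at most H, each vertex can be active (i.e., occupied and having an outgoing edge to a strictly lower-level empty vertex at the start of a phase) for at most O(H²) phases. -/
open Finset

universe u1 u2

/-- A vertex `v` is occupied at phase `τ` if some token resides there. -/
def Occupied {V T : Type*} (pos : ℕ → T → V) (τ : ℕ) (v : V) : Prop :=
  ∃ s, pos τ s = v

/-- A vertex `v` is active at the start of phase `τ` if it is occupied and has an
outgoing edge to a strictly lower-level empty vertex. -/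
def Active {V T : Type*} [DecidableEq V] (level : V → ℕ) (edges : ℕ → Finset (V × V))
    (pos : ℕ → T → V) (τ : ℕ) (v : V) : Prop :=
  Occupied pos τ v ∧ ∃ w, (v, w) ∈ edges τ ∧ level w < level v ∧ ¬ Occupied pos τ w

/-! Every phase in which `v` is active, `v` proposes along one of its at most `H` initial
out-edges, to some `w`. Each such proposal finds `w` empty and leaves it occupied one phase
later, so between two proposals of `v` to the same `w` the token at `w` must leave, and it
leaves along an out-edge of `w` that is then removed for good. Hence `v` proposes to each `w`
at most `H + 1` times, and `v` is active in at most `H (H + 1) ≤ 2 H²` phases. -/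

section Transitions

variable (P : ℕ → Prop) [DecidablePred P]

theorem card_rises_add_eq_card_falls_add (b : ℕ) :
    #{τ ∈ range b | ¬P τ ∧ P (τ + 1)} + (if P 0 then 1 else 0) =
      #{σ ∈ range b | P σ ∧ ¬P (σ + 1)} + (if P b then 1 else 0) := by
  induction b with
  | zero => simp
  | succ b ih =>
    simp only [range_add_one, filter_insert]
    by_cases hb : P b <;> by_cases hb' : P (b + 1) <;> simp_all
    omega

theorem card_rises_le_card_falls_add_one (b : ℕ) :
    #{τ ∈ range b | ¬P τ ∧ P (τ + 1)} ≤ #{σ ∈ range b | P σ ∧ ¬P (σ + 1)} + 1 := by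
  have := card_rises_add_eq_card_falls_add P b
  split_ifs at this <;> omega

end Transitions

theorem Antitone.card_le_card_filter_of_forall_exists_mem_sdiff {α : Type*}
    {E : ℕ → Finset α} (hE : Antitone E) {p : α → Prop} [DecidablePred p] {F : Finset ℕ}
    (hF : ∀ σ ∈ F, ∃ e, p e ∧ e ∈ E σ ∧ e ∉ E (σ + 1)) : #F ≤ #{e ∈ E 0 | p e} := by
  rcases F.eq_empty_or_nonempty with rfl | ⟨σ₀, hσ₀⟩
  · simp
  have : Nonempty α := ⟨(hF σ₀ hσ₀).choose⟩
  choose! removed hp hmem hnotMem using hF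
  have hne : ∀ σ₁ ∈ F, ∀ σ₂ ∈ F, σ₁ < σ₂ → removed σ₁ ≠ removed σ₂ := fun σ₁ h₁ σ₂ h₂ hlt heq =>
    hnotMem σ₁ h₁ (heq ▸ hE hlt (hmem σ₂ h₂))
  refine card_le_card_of_injOn removed
    (fun σ hσ => mem_filter.2 ⟨hE σ.zero_le (hmem σ hσ), hp σ hσ⟩) fun σ₁ h₁ σ₂ h₂ heq => ?_
  rcases lt_trichotomy σ₁ σ₂ with hlt | rfl | hgt
  exacts [absurd heq (hne σ₁ h₁ σ₂ h₂ hlt), rfl, absurd heq.symm (hne σ₂ h₂ σ₁ h₁ hgt)]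

section TokenDropping

variable {V T : Type*} [DecidableEq V] {edges : ℕ → Finset (V × V)} {pos : ℕ → T → V}

theorem card_vacating_le_outdeg (hshrink : ∀ τ, edges (τ + 1) ⊆ edges τ)
    (hmove : ∀ τ s, pos (τ + 1) s ≠ pos τ s →
      (pos τ s, pos (τ + 1) s) ∈ edges τ ∧ (pos τ s, pos (τ + 1) s) ∉ edges (τ + 1))
    (w : V) {F : Finset ℕ} (hF : ∀ σ ∈ F, Occupied pos σ w ∧ ¬Occupied pos (σ + 1) w) :
    #F ≤ outdeg (edges 0) w := by
  refine (antitone_nat_of_succ_le hshrink).card_le_card_filter_of_forall_exists_mem_sdiff ?_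
  intro σ hσ
  obtain ⟨⟨s, hs⟩, hvacated⟩ := hF σ hσ
  have hmoved : pos (σ + 1) s ≠ pos σ s := fun h => hvacated ⟨s, h.trans hs⟩
  exact ⟨_, hs, hmove σ s hmoved⟩

theorem card_filling_le_outdeg_add_one (hshrink : ∀ τ, edges (τ + 1) ⊆ edges τ)
    (hmove : ∀ τ s, pos (τ + 1) s ≠ pos τ s →
      (pos τ s, pos (τ + 1) s) ∈ edges τ ∧ (pos τ s, pos (τ + 1) s) ∉ edges (τ + 1))
    (w : V) {S : Finset ℕ} (hS : ∀ τ ∈ S, ¬Occupied pos τ w ∧ Occupied pos (τ + 1) w) :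
    #S ≤ outdeg (edges 0) w + 1 := by
  classical
  obtain ⟨b, hb⟩ := exists_nat_subset_range S
  calc #S ≤ #{τ ∈ range b | ¬Occupied pos τ w ∧ Occupied pos (τ + 1) w} :=
        card_le_card fun τ hτ => mem_filter.2 ⟨hb hτ, hS τ hτ⟩
    _ ≤ #{σ ∈ range b | Occupied pos σ w ∧ ¬Occupied pos (σ + 1) w} + 1 :=
        card_rises_le_card_falls_add_one _ b
    _ ≤ outdeg (edges 0) w + 1 := by
        gcongr
        exact card_vacating_le_outdeg hshrink hmove w fun σ hσ => (mem_filter.1 hσ).2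

end TokenDropping

/-- In the parallel token-dropping process on a directed graph with all out-degrees at
most `H`, each vertex can be active for at most `O(H²)` phases.

The process: at most one token per vertex (`hinj`); edges are only removed over time
(`hshrink`); when a token moves during phase `τ`, it moves along an edge of the current
graph to a strictly lower-level vertex that was empty at the start of the phase, the used
edge is removed, and the move follows the proposal of its vertex (`hmoves`); proposals go
along current edges, from occupied vertices to strictly lower-level empty vertices
(`hprop`); every active vertex makes a proposal (`hactive`); and every proposal is either
accepted (the proposer's token moves to the target) or the target received another token
during that phase (`haccept`). -/
theorem active_phases_le :
    ∃ C : ℕ, 0 < C ∧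
    ∀ (V : Type u1) (T : Type u2) [DecidableEq V] [Fintype T] (H : ℕ)
      (level : V → ℕ) (edges : ℕ → Finset (V × V)) (pos : ℕ → T → V)
      (prop : ℕ → V → Option V),
      (∀ τ, Function.Injective (pos τ)) →
      (∀ τ w, outdeg (edges τ) w ≤ H) →
      (∀ τ, edges (τ + 1) ⊆ edges τ) →
      (∀ (τ : ℕ) (s : T), pos (τ + 1) s ≠ pos τ s →
        (pos τ s, pos (τ + 1) s) ∈ edges τ ∧ (pos τ s, pos (τ + 1) s) ∉ edges (τ + 1) ∧
          level (pos (τ + 1) s) < level (pos τ s) ∧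
          prop τ (pos τ s) = some (pos (τ + 1) s) ∧
          ∀ s'', pos τ s'' ≠ pos (τ + 1) s) →
      (∀ τ u w, prop τ u = some w →
        (u, w) ∈ edges τ ∧ level w < level u ∧ ¬ Occupied pos τ w ∧ Occupied pos τ u) →
      (∀ τ u, Active level edges pos τ u → (prop τ u).isSome) →
      (∀ τ u w, prop τ u = some w →
        (∃ s, pos τ s = u ∧ pos (τ + 1) s = w) ∨
          (∃ s, pos (τ + 1) s = w ∧ pos τ s ≠ w)) →
      ∀ (v : V) (Ph : Finset ℕ), (∀ τ ∈ Ph, Active level edges pos τ v) →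
        Ph.card ≤ C * H ^ 2 := by
  classical
  refine ⟨2, two_pos, ?_⟩
  intro V T _ _ H level edges pos prop _ hdeg hshrink hmoves hprop hactive haccept v Ph hPh
  have hmove τ s (h : pos (τ + 1) s ≠ pos τ s) := And.intro (hmoves τ s h).1 (hmoves τ s h).2.1
  set targets := {e ∈ edges 0 | e.1 = v}.image (some ∘ Prod.snd)
  have hmaps : ∀ τ ∈ Ph, prop τ v ∈ targets := by
    intro τ hτ
    obtain ⟨w, hw⟩ := Option.isSome_iff_exists.1 (hactive τ v (hPh τ hτ))
    exact hw ▸ mem_image.2 ⟨(v, w),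
      mem_filter.2 ⟨antitone_nat_of_succ_le hshrink τ.zero_le (hprop τ v w hw).1, rfl⟩, rfl⟩
  have hfiber : ∀ a ∈ targets, #{τ ∈ Ph | prop τ v = a} ≤ H + 1 := by
    intro a ha
    obtain ⟨⟨-, w⟩, -, rfl⟩ := mem_image.1 ha
    refine (card_filling_le_outdeg_add_one hshrink hmove w fun τ hτ => ?_).trans
      (Nat.add_le_add_right (hdeg 0 w) 1)
    have hw := (mem_filter.1 hτ).2
    refine ⟨(hprop τ v w hw).2.2.1, ?_⟩
    rcases haccept τ v w hw with ⟨s, -, hs⟩ | ⟨s, hs, -⟩ <;> exact ⟨s, hs⟩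
  have htargets : #targets ≤ H := card_image_le.trans (hdeg 0 v)
  calc #Ph ≤ (H + 1) * #targets := card_le_mul_card_image_of_maps_to hmaps _ hfiber
    _ ≤ (H + 1) * H := Nat.mul_le_mul_left _ htargets
    _ ≤ 2 * H ^ 2 := by nlinarith
end

section
/- The parallel token-dropping process on a directed graph where out-degrees are at most H, vertex levels lie in {0, 1, ..., H}, and tokens strictly decrease in level at each move, halts after at most O(H³) phases. -/
/-!
A vertex `v` is active in at most `H (H + 2)` phases. When active it proposes along one of its
at most `H` original out-edges `(v, w)`, and then either its token leaves, which happens at most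
`H` times because each departure consumes an out-edge of `v`, or `w` receives a token, which
happens at most once more than `w` loses one.

If a token `s` moves at phase `τ` to a vertex `w` of level `ℓ`, every phase `τ' ≤ τ` has an
active vertex on the extended traversal of `s`: if none of the at most `H - ℓ` vertices that `s`
leaves from `τ'` on is active at `τ'`, each one's successor on the path is occupied at `τ'`, and
so is `w`. As `w` is empty at `τ`, the token there leaves before `τ` along an edge to an occupied
vertex of lower level, and so on, a chain of at most `ℓ + 1` vertices. Hence
`τ + 1 ≤ (H + 1) · H (H + 2) ≤ 6 H³`.
-/

open Finset

universe u1 u2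

open scoped Classical

namespace TokenDropping

variable {V T : Type*}

theorem outdeg_mono [DecidableEq V] {E F : Finset (V × V)} (h : E ⊆ F) (v : V) :
    outdeg E v ≤ outdeg F v :=
  card_le_card (filter_subset_filter _ h)

theorem outdeg_lt_of_mem_of_notMem [DecidableEq V] {E F : Finset (V × V)} (h : E ⊆ F)
    {e : V × V} (heF : e ∈ F) (heE : e ∉ E) : outdeg E e.1 < outdeg F e.1 :=
  card_lt_card ⟨filter_subset_filter _ h,
    fun hsub => heE (mem_filter.1 (hsub (mem_filter.2 ⟨heF, rfl⟩))).1⟩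

def Moves (pos : ℕ → T → V) (s : T) (τ : ℕ) : Prop :=
  pos (τ + 1) s ≠ pos τ s

def Departs (pos : ℕ → T → V) (v : V) (τ : ℕ) : Prop :=
  ∃ q, pos τ q = v ∧ pos (τ + 1) q ≠ v

def Arrives (pos : ℕ → T → V) (w : V) (τ : ℕ) : Prop :=
  ∃ q, pos (τ + 1) q = w ∧ pos τ q ≠ w

def MovesAlongEdges (edges : ℕ → Finset (V × V)) (pos : ℕ → T → V) : Prop :=
  ∀ τ s, Moves pos s τ →
    (pos τ s, pos (τ + 1) s) ∈ edges τ ∧ (pos τ s, pos (τ + 1) s) ∉ edges (τ + 1)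

def MovesDownward (level : V → ℕ) (pos : ℕ → T → V) : Prop :=
  ∀ τ s, Moves pos s τ → level (pos (τ + 1) s) < level (pos τ s)

def MovesIntoEmpty (pos : ℕ → T → V) : Prop :=
  ∀ τ s, Moves pos s τ → ¬ Occupied pos τ (pos (τ + 1) s)

def ActiveResolved [DecidableEq V] (level : V → ℕ) (edges : ℕ → Finset (V × V))
    (pos : ℕ → T → V) : Prop :=
  ∀ τ v, Active level edges pos τ v →
    ∃ w, (v, w) ∈ edges τ ∧ (Departs pos v τ ∨ Arrives pos w τ)

variable {level : V → ℕ} {edges : ℕ → Finset (V × V)} {pos : ℕ → T → V}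

theorem card_departs_add_outdeg_le [DecidableEq V] (hmove : MovesAlongEdges edges pos)
    (hanti : Antitone edges) (v : V) (D : ℕ) :
    ((range D).filter (Departs pos v)).card + outdeg (edges D) v ≤ outdeg (edges 0) v := by
  induction D with
  | zero => simp
  | succ D ih =>
    have hsub : edges (D + 1) ⊆ edges D := hanti D.le_succ
    rw [range_add_one, filter_insert]
    split_ifs with hdep
    · obtain ⟨q, hq, hne⟩ := hdep
      have hmoved : Moves pos q D := by rwa [Moves, hq]
      have hlt := outdeg_lt_of_mem_of_notMem hsub (hmove D q hmoved).1 (hmove D q hmoved).2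
      rw [card_insert_of_notMem (by simp)]
      simp only [hq] at hlt
      omega
    · have := outdeg_mono hsub v
      omega

theorem card_arrives_le (hempty : MovesIntoEmpty pos) (w : V) (D : ℕ) :
    ((range D).filter (Arrives pos w)).card ≤
      ((range D).filter (Departs pos w)).card + if Occupied pos D w then 1 else 0 := by
  induction D with
  | zero => simp
  | succ D ih =>
    have hfresh : ∀ p : ℕ → Prop, D ∉ (range D).filter p := by simp
    rw [range_add_one, filter_insert, filter_insert]
    by_cases harr : Arrives pos w D
    · obtain ⟨q, hq, hne⟩ := harr
      have hD : ¬ Occupied pos D w := hq ▸ hempty D q (by rw [Moves, hq]; exact hne.symm)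
      have hD1 : Occupied pos (D + 1) w := ⟨q, hq⟩
      rw [if_pos ⟨q, hq, hne⟩, card_insert_of_notMem (hfresh _), if_pos hD1]
      rw [if_neg hD] at ih
      have hnodep : ¬ Departs pos w D := fun ⟨q', hq', _⟩ => hD ⟨q', hq'⟩
      rw [if_neg hnodep]
      omega
    · rw [if_neg harr]
      by_cases hdep : Departs pos w D
      · rw [if_pos hdep, card_insert_of_notMem (hfresh _)]
        split_ifs at ih ⊢ <;> omega
      · rw [if_neg hdep]
        have hstay : Occupied pos D w → Occupied pos (D + 1) w := fun ⟨q, hq⟩ =>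
          ⟨q, by_contra fun h => hdep ⟨q, hq, h⟩⟩
        by_cases hD : Occupied pos D w
        · rw [if_pos hD] at ih; rw [if_pos (hstay hD)]; exact ih
        · rw [if_neg hD] at ih; omega

theorem card_active_le [DecidableEq V] {H : ℕ} (hmove : MovesAlongEdges edges pos)
    (hempty : MovesIntoEmpty pos) (hanti : Antitone edges) (hres : ActiveResolved level edges pos)
    (hout : ∀ u, outdeg (edges 0) u ≤ H) (v : V) (D : ℕ) :
    ((range D).filter (Active level edges pos · v)).card ≤ H * (H + 2) := by
  have hdep : ∀ u, ((range D).filter (Departs pos u)).card ≤ H := fun u =>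
    (Nat.le_of_add_right_le (card_departs_add_outdeg_le hmove hanti u D)).trans (hout u)
  have harr : ∀ u, ((range D).filter (Arrives pos u)).card ≤ H + 1 := fun u => by
    have := card_arrives_le hempty u D
    have := hdep u
    split_ifs at * <;> omega
  set N := ((edges 0).filter (·.1 = v)).image Prod.snd
  have hN : N.card ≤ H := card_image_le.trans (hout v)
  have hcover : (range D).filter (Active level edges pos · v) ⊆
      (range D).filter (Departs pos v) ∪
        N.biUnion (fun w => (range D).filter (Arrives pos w)) := by
    intro τ hτ
    rw [mem_filter] at hτ
    obtain ⟨w, hvw, hdep | harr⟩ := hres τ v hτ.2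
    · exact mem_union_left _ (mem_filter.2 ⟨hτ.1, hdep⟩)
    · refine mem_union_right _ (mem_biUnion.2 ⟨w, ?_, mem_filter.2 ⟨hτ.1, harr⟩⟩)
      exact mem_image.2 ⟨(v, w), mem_filter.2 ⟨hanti (Nat.zero_le τ) hvw, rfl⟩, rfl⟩
  calc _ ≤ _ := card_le_card hcover
    _ ≤ H + N.card * (H + 1) :=
      (card_union_le _ _).trans
        (add_le_add (hdep v) (card_biUnion_le_card_mul _ _ _ fun u _ => harr u))
    _ ≤ H + H * (H + 1) := by gcongr
    _ = H * (H + 2) := by ring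

theorem activeResolved_of_proposals [DecidableEq V] {prop : ℕ → V → Option V}
    (hprop : ∀ τ u w, prop τ u = some w → (u, w) ∈ edges τ ∧ level w < level u)
    (hactive : ∀ τ u, Active level edges pos τ u → (prop τ u).isSome)
    (haccept : ∀ τ u w, prop τ u = some w →
      (∃ s, pos τ s = u ∧ pos (τ + 1) s = w) ∨ (∃ s, pos (τ + 1) s = w ∧ pos τ s ≠ w)) :
    ActiveResolved level edges pos := by
  intro τ v hv
  obtain ⟨w, hw⟩ := Option.isSome_iff_exists.1 (hactive τ v hv)
  obtain ⟨hvw, hlt⟩ := hprop τ v w hw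
  refine ⟨w, hvw, ?_⟩
  rcases haccept τ v w hw with ⟨s, hs, hs'⟩ | harr
  · exact Or.inl ⟨s, hs, by rw [hs']; exact fun h => hlt.ne (congrArg level h)⟩
  · exact Or.inr harr

theorem occupied_of_not_active [DecidableEq V] (hmove : MovesAlongEdges edges pos)
    (hdown : MovesDownward level pos) (hanti : Antitone edges) {q : T} {ρ τ : ℕ} (hτ : τ ≤ ρ)
    (hq : Moves pos q ρ) (hocc : Occupied pos τ (pos ρ q))
    (hact : ¬ Active level edges pos τ (pos ρ q)) : Occupied pos τ (pos (ρ + 1) q) :=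
  by_contra fun hempty => hact ⟨hocc, _, hanti hτ (hmove ρ q hq).1, hdown ρ q hq, hempty⟩

theorem active_on_path_or_occupied [DecidableEq V] (hmove : MovesAlongEdges edges pos)
    (hdown : MovesDownward level pos) (hanti : Antitone edges) (s : T) {τ σ d : ℕ}
    (hτσ : τ ≤ σ) (hσd : σ ≤ d) (hocc : Occupied pos τ (pos σ s)) :
    (∃ ρ, σ ≤ ρ ∧ ρ < d ∧ Moves pos s ρ ∧ Active level edges pos τ (pos ρ s)) ∨
      Occupied pos τ (pos d s) := by
  induction hσd using Nat.decreasingInduction with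
  | self => exact Or.inr hocc
  | of_succ σ hσd ih =>
    by_cases hact : Moves pos s σ ∧ Active level edges pos τ (pos σ s)
    · exact Or.inl ⟨σ, le_rfl, hσd, hact⟩
    have hnext : Occupied pos τ (pos (σ + 1) s) := by
      by_cases hstay : pos (σ + 1) s = pos σ s
      · rwa [hstay]
      · exact occupied_of_not_active hmove hdown hanti hτσ hstay hocc fun h => hact ⟨hstay, h⟩
    exact (ih (by omega) hnext).imp_left fun ⟨ρ, hρ, h⟩ => ⟨ρ, by omega, h⟩

theorem card_occupied_le [DecidableEq V] {P : ℕ} (hmove : MovesAlongEdges edges pos)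
    (hdown : MovesDownward level pos) (hempty : MovesIntoEmpty pos) (hanti : Antitone edges)
    (hact : ∀ u D, ((range D).filter (Active level edges pos · u)).card ≤ P)
    (v : V) (d : ℕ) (hd : ¬ Occupied pos d v) :
    ((range d).filter (Occupied pos · v)).card ≤ (level v + 1) * P := by
  induction d with
  | zero => simp
  | succ d ih =>
    rw [range_add_one, filter_insert]
    by_cases hv : Occupied pos d v
    swap
    · rw [if_neg hv]; exact ih hv
    rw [if_pos hv]
    obtain ⟨q, hq⟩ := hv
    have hmoved : Moves pos q d := fun h => hd ⟨q, h.trans hq⟩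
    set x := pos (d + 1) q
    have hx : ¬ Occupied pos d x := hempty d q hmoved
    have hlt : level x < level v := hq ▸ hdown d q hmoved
    have hcover : insert d ((range d).filter (Occupied pos · v)) ⊆
        (range (d + 1)).filter (Active level edges pos · v) ∪
          (range d).filter (Occupied pos · x) := by
      intro τ hτ
      rw [mem_insert, mem_filter, mem_range] at hτ
      by_cases hact : Active level edges pos τ v
      · exact mem_union_left _ (mem_filter.2 ⟨mem_range.2 (by omega), hact⟩)
      obtain rfl | ⟨hτd, hocc⟩ := hτ
      · exact absurd ⟨⟨q, hq⟩, x, hq ▸ (hmove τ q hmoved).1, hlt, hx⟩ hact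
      · refine mem_union_right _ (mem_filter.2 ⟨mem_range.2 hτd, ?_⟩)
        exact occupied_of_not_active hmove hdown hanti hτd.le hmoved (hq ▸ hocc) (hq ▸ hact)
    calc _ ≤ _ := card_le_card hcover
      _ ≤ P + (level x + 1) * P :=
        (card_union_le _ _).trans
          (add_le_add (hact v _) (card_occupied_le hmove hdown hempty hanti hact x d hx))
      _ ≤ (level v + 1) * P := by nlinarith
termination_by level v

theorem card_moves_add_level_le (hdown : MovesDownward level pos) (s : T) (D : ℕ) :
    ((range D).filter (Moves pos s)).card + level (pos D s) ≤
      level (pos 0 s) := by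
  induction D with
  | zero => simp
  | succ D ih =>
    rw [range_add_one, filter_insert]
    split_ifs with hmoved
    · rw [card_insert_of_notMem (by simp)]
      have := hdown D s hmoved
      omega
    · rw [Moves, not_not] at hmoved
      rwa [hmoved]

theorem succ_le_of_moves [DecidableEq V] {H P : ℕ} (hmove : MovesAlongEdges edges pos)
    (hdown : MovesDownward level pos) (hempty : MovesIntoEmpty pos) (hanti : Antitone edges)
    (hlevel : ∀ v, level v ≤ H)
    (hact : ∀ u D, ((range D).filter (Active level edges pos · u)).card ≤ P)
    {τ : ℕ} {s : T} (hs : Moves pos s τ) : τ + 1 ≤ (H + 1) * P := by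
  set w := pos (τ + 1) s
  set path := ((range (τ + 1)).filter (Moves pos s)).image (pos · s)
  have hmoves : ((range (τ + 1)).filter (Moves pos s)).card + level w ≤
      level (pos 0 s) := card_moves_add_level_le hdown s (τ + 1)
  have hpath : path.card ≤ H - level w :=
    card_image_le.trans (by have := hlevel (pos 0 s); omega)
  have hcover : range (τ + 1) ⊆
      path.biUnion (fun u => (range (τ + 1)).filter (Active level edges pos · u)) ∪
        (range τ).filter (Occupied pos · w) := by
    intro τ' hτ'
    rw [mem_range] at hτ'
    rcases active_on_path_or_occupied hmove hdown hanti s le_rfl hτ'.le ⟨s, rfl⟩ with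
      ⟨ρ, hρ, hρτ, hmoved, hact⟩ | hw
    · refine mem_union_left _ (mem_biUnion.2 ⟨pos ρ s, ?_, mem_filter.2 ⟨mem_range.2 hτ', hact⟩⟩)
      exact mem_image_of_mem _ (mem_filter.2 ⟨mem_range.2 hρτ, hmoved⟩)
    · have hτ'τ : τ' ≠ τ := by rintro rfl; exact hempty τ' s hs hw
      exact mem_union_right _ (mem_filter.2 ⟨mem_range.2 (by omega), hw⟩)
  calc τ + 1 = (range (τ + 1)).card := (card_range _).symm
    _ ≤ _ := card_le_card hcover
    _ ≤ (H - level w) * P + (level w + 1) * P :=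
      (card_union_le _ _).trans (add_le_add
        ((card_biUnion_le_card_mul _ _ _ fun u _ => hact u _).trans (by gcongr))
        (card_occupied_le hmove hdown hempty hanti hact w τ (hempty τ s hs)))
    _ = (H + 1) * P := by have := hlevel w; rw [← add_mul]; congr 1; omega

end TokenDropping

/-- The parallel token-dropping process, on a directed graph with out-degrees at most `H`,
vertex levels in `{0, …, H}`, and tokens strictly decreasing in level at each move,
halts after `O(H³)` phases: no token moves from phase `C·H³` on.

Process axioms: at most one token per vertex (`hinj`); levels are bounded by `H`
(`hlevel`); out-degrees are bounded by `H` (`hout`); edges are only removed (`hshrink`),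
and only when a token moves along them (`hremove`); a moving token goes along a current
edge, which is consumed, to a strictly lower-level vertex empty at the start of the phase,
following its vertex's proposal (`hmoves`); proposals go along current edges, from
occupied vertices to strictly lower-level empty vertices (`hprop`); every active vertex
proposes (`hactive`); each proposal is accepted or its target receives some other token
that phase (`haccept`); and as long as some vertex is active, some token moves
(`hprogress`). -/
theorem token_dropping_halts :
    ∃ C : ℕ, 0 < C ∧
    ∀ (V : Type u1) (T : Type u2) [DecidableEq V] [Fintype T] (H : ℕ)
      (level : V → ℕ) (edges : ℕ → Finset (V × V)) (pos : ℕ → T → V)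
      (prop : ℕ → V → Option V),
      (∀ τ, Function.Injective (pos τ)) →
      (∀ v, level v ≤ H) →
      (∀ τ w, outdeg (edges τ) w ≤ H) →
      (∀ τ, edges (τ + 1) ⊆ edges τ) →
      (∀ (τ : ℕ) (e : V × V), e ∈ edges τ → e ∉ edges (τ + 1) →
        ∃ s, pos τ s = e.1 ∧ pos (τ + 1) s = e.2) →
      (∀ (τ : ℕ) (s : T), pos (τ + 1) s ≠ pos τ s →
        (pos τ s, pos (τ + 1) s) ∈ edges τ ∧ (pos τ s, pos (τ + 1) s) ∉ edges (τ + 1) ∧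
          level (pos (τ + 1) s) < level (pos τ s) ∧
          prop τ (pos τ s) = some (pos (τ + 1) s) ∧
          ∀ s'', pos τ s'' ≠ pos (τ + 1) s) →
      (∀ τ u w, prop τ u = some w →
        (u, w) ∈ edges τ ∧ level w < level u ∧ ¬ Occupied pos τ w ∧ Occupied pos τ u) →
      (∀ τ u, Active level edges pos τ u → (prop τ u).isSome) →
      (∀ τ u w, prop τ u = some w →
        (∃ s, pos τ s = u ∧ pos (τ + 1) s = w) ∨
          (∃ s, pos (τ + 1) s = w ∧ pos τ s ≠ w)) →
      (∀ τ : ℕ, (∃ u, Active level edges pos τ u) → ∃ s, pos (τ + 1) s ≠ pos τ s) →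
      ∀ τ : ℕ, C * H ^ 3 ≤ τ → ∀ s : T, pos (τ + 1) s = pos τ s := by
  refine ⟨6, by norm_num, ?_⟩
  intro V T _ _ H level edges pos prop _ hlevel hout hshrink _ hmoves hprop hactive haccept _
    τ hτ s
  by_contra hs
  have hmove : TokenDropping.MovesAlongEdges edges pos := fun τ s h =>
    ⟨(hmoves τ s h).1, (hmoves τ s h).2.1⟩
  have hdown : TokenDropping.MovesDownward level pos := fun τ s h => (hmoves τ s h).2.2.1
  have hempty : TokenDropping.MovesIntoEmpty pos := fun τ s h =>
    not_exists.2 (hmoves τ s h).2.2.2.2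
  have hanti : Antitone edges := antitone_nat_of_succ_le hshrink
  have hres : TokenDropping.ActiveResolved level edges pos :=
    TokenDropping.activeResolved_of_proposals
      (fun τ u w h => ⟨(hprop τ u w h).1, (hprop τ u w h).2.1⟩) hactive haccept
  have hbound := TokenDropping.succ_le_of_moves hmove hdown hempty hanti hlevel
    (TokenDropping.card_active_le hmove hempty hanti hres (hout 0)) hs
  have hcube : (H + 1) * (H * (H + 2)) ≤ 6 * H ^ 3 := by
    rcases Nat.eq_zero_or_pos H with rfl | hH
    · simp
    · have h1 : H ≤ H ^ 3 := Nat.le_self_pow (by norm_num) H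
      have h2 : H ^ 2 ≤ H ^ 3 := Nat.pow_le_pow_right hH (by norm_num)
      nlinarith
  omega
end
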